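/- arXiv:2604.25344 — 7 statements merged into one kernel-verified Lean document; each statement's English description precedes it below -/
import Mathlib

section
/- Let K be a simplicial complex on [m] and let {a_J : J ⊆ [m]} be a family of elements of an abelian group such that whenever A, B ⊆ [m] satisfy K_{A∪B} = K_A ∪ K_B (as subcomplexes), one has a_{A∪B} = a_A + a_B − a_{A∩B}. Then for every J ⊆ [m], a_J = Σ_{B ∈ K^f_J} (−1)^{|B|} Σ_{I ⊆ B} (−1)^{|I|} a_I, where K^f denotes the flagification of K (the flag complex on the 1-skeleton of K) and K^f_J its full subcomplex on J. -/
/-!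
STATEMENT 0: Let `K` be a simplicial complex on `[m]` and `a_J` a family of elements of an
abelian group, indexed by subsets `J ⊆ [m]`, such that whenever `K_{A∪B} = K_A ∪ K_B` one has
`a_{A∪B} = a_A + a_B − a_{A∩B}`.  Then for every `J`,
`a_J = Σ_{B ∈ K^f_J} (−1)^{|B|} Σ_{I ⊆ B} (−1)^{|I|} a_I`,
where `K^f` is the flagification of `K` (subsets all of whose 2-element subsets are edges of `K`).
-/

open Finset in
private lemma inv_lemma {α : Type*} [DecidableEq α] {G : Type*} [AddCommGroup G] :
    ∀ (J : Finset α) (f : Finset α → G),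
      ∑ B ∈ J.powerset, (-1 : ℤ) ^ B.card • ∑ I ∈ B.powerset, (-1 : ℤ) ^ I.card • f I = f J := by
  intro J
  induction J using Finset.induction_on with
  | empty => intro f; simp
  | @insert x s hx ih =>
    intro f
    rw [Finset.sum_powerset_insert hx, ← Finset.sum_add_distrib]
    refine Eq.trans (Finset.sum_congr rfl ?_) (ih (fun I => f (insert x I)))
    intro B hB
    have hxB : x ∉ B := fun h => hx (Finset.mem_powerset.mp hB h)
    rw [Finset.sum_powerset_insert hxB, Finset.card_insert_of_notMem hxB]
    have h2 : ∀ I ∈ B.powerset, (-1 : ℤ) ^ (insert x I).card • f (insert x I)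
        = -((-1 : ℤ) ^ I.card • f (insert x I)) := by
      intro I hI
      have hxI : x ∉ I := fun h => hx (Finset.mem_powerset.mp hB (Finset.mem_powerset.mp hI h))
      rw [Finset.card_insert_of_notMem hxI, pow_succ, mul_smul]
      simp
    rw [Finset.sum_congr rfl h2, Finset.sum_neg_distrib, pow_succ]
    module

open Finset in
private lemma vanish {m : ℕ} {G : Type*} [AddCommGroup G]
    (K : Finset (Finset (Fin m)))
    (hdown : ∀ σ ∈ K, ∀ τ ⊆ σ, τ ∈ K)
    (a : Finset (Fin m) → G)
    (hadd : ∀ S T : Finset (Fin m),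
      (∀ σ ∈ K, σ ⊆ S ∪ T → σ ⊆ S ∨ σ ⊆ T) →
      a (S ∪ T) = a S + a T - a (S ∩ T))
    (B : Finset (Fin m)) (i j : Fin m) (hi : i ∈ B) (hj : j ∈ B) (hij : i ≠ j)
    (hK : ({i, j} : Finset (Fin m)) ∉ K) :
    ∑ I ∈ B.powerset, (-1 : ℤ) ^ I.card • a I = 0 := by
  classical
  set C := B \ {i, j} with hC
  have hiC : i ∉ insert j C := by
    simp [hC, hij]
  have hjC : j ∉ C := by simp [hC]
  have hBeq : B = insert i (insert j C) := by
    ext x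
    simp only [hC, Finset.mem_insert, Finset.mem_sdiff, Finset.mem_insert,
      Finset.mem_singleton]
    constructor
    · intro hx
      by_cases h1 : x = i
      · left; exact h1
      · by_cases h2 : x = j
        · right; left; exact h2
        · right; right; exact ⟨hx, fun h => h.elim h1 h2⟩
    · rintro (rfl | rfl | ⟨hx, _⟩) <;> assumption
  rw [hBeq, Finset.sum_powerset_insert hiC, Finset.sum_powerset_insert hjC,
    Finset.sum_powerset_insert hjC, ← Finset.sum_add_distrib, ← Finset.sum_add_distrib,
    ← Finset.sum_add_distrib]
  apply Finset.sum_eq_zero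
  intro t ht
  have htC := Finset.mem_powerset.mp ht
  have hit : i ∉ t := fun h => by have := htC h; simp [hC] at this
  have hjt : j ∉ t := fun h => by have := htC h; simp [hC] at this
  have hijt : i ∉ insert j t := by simp [hij, hit]
  have hunion : insert i t ∪ insert j t = insert i (insert j t) := by
    rw [Finset.insert_union, Finset.union_insert, Finset.union_self]
  have hinter : insert i t ∩ insert j t = t := by
    ext x
    simp only [Finset.mem_inter, Finset.mem_insert]
    constructor
    · rintro ⟨h1 | h1, h2 | h2⟩
      · subst h1; exact absurd h2 hij
      · subst h1; exact absurd h2 hit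
      · subst h2; exact absurd h1 hjt
      · exact h1
    · intro h; exact ⟨Or.inr h, Or.inr h⟩
  have hsplit : ∀ σ ∈ K, σ ⊆ insert i t ∪ insert j t → σ ⊆ insert i t ∨ σ ⊆ insert j t := by
    intro σ hσ hsub
    rw [hunion] at hsub
    by_cases hiσ : i ∈ σ
    · by_cases hjσ : j ∈ σ
      · exact absurd (hdown σ hσ {i, j} (by
          intro x hx
          rcases Finset.mem_insert.mp hx with rfl | hx
          · exact hiσ
          · rw [Finset.mem_singleton] at hx; subst hx; exact hjσ)) hK
      · left
        intro x hx
        have hx2 := hsub hx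
        rw [Finset.insert_comm] at hx2
        rcases Finset.mem_insert.mp hx2 with rfl | h
        · exact absurd hx hjσ
        · exact h
    · right
      intro x hx
      rcases Finset.mem_insert.mp (hsub hx) with rfl | h
      · exact absurd hx hiσ
      · exact h
  have key := hadd (insert i t) (insert j t) hsplit
  rw [hunion, hinter] at key
  rw [Finset.card_insert_of_notMem hijt, Finset.card_insert_of_notMem hjt,
    Finset.card_insert_of_notMem hit, key]
  simp only [pow_succ]
  module


theorem stmt0 {m : ℕ} (G : Type*) [AddCommGroup G]
    (K : Finset (Finset (Fin m)))
    (hdown : ∀ σ ∈ K, ∀ τ ⊆ σ, τ ∈ K)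
    (a : Finset (Fin m) → G)
    (hadd : ∀ S T : Finset (Fin m),
      (∀ σ ∈ K, σ ⊆ S ∪ T → σ ⊆ S ∨ σ ⊆ T) →
      a (S ∪ T) = a S + a T - a (S ∩ T)) :
    ∀ J : Finset (Fin m),
      a J = ∑ B ∈ J.powerset.filter
          (fun B => ∀ i ∈ B, ∀ j ∈ B, i ≠ j → ({i, j} : Finset (Fin m)) ∈ K),
        (-1 : ℤ) ^ B.card •
          ∑ I ∈ B.powerset, (-1 : ℤ) ^ I.card • a I := by
  intro J
  classical
  have h1 := inv_lemma J a
  rw [← Finset.sum_filter_add_sum_filter_not J.powerset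
    (fun B => ∀ i ∈ B, ∀ j ∈ B, i ≠ j → ({i, j} : Finset (Fin m)) ∈ K)] at h1
  have h2 : ∑ B ∈ J.powerset.filter
      (fun B => ¬ ∀ i ∈ B, ∀ j ∈ B, i ≠ j → ({i, j} : Finset (Fin m)) ∈ K),
      (-1 : ℤ) ^ B.card • ∑ I ∈ B.powerset, (-1 : ℤ) ^ I.card • a I = 0 := by
    apply Finset.sum_eq_zero
    intro B hB
    obtain ⟨-, hB2⟩ := Finset.mem_filter.mp hB
    push_neg at hB2
    obtain ⟨i, hi, j, hj, hij, hK⟩ := hB2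
    rw [vanish K hdown a hadd B i j hi hj hij hK, smul_zero]
  rw [h2, add_zero] at h1
  exact h1.symm
end

section
/- Let K be a simplicial complex on [m] and let {a_J} be as above (satisfying a_{A∪B} = a_A + a_B − a_{A∩B} whenever K_{A∪B} = K_A ∪ K_B). Then for every J ⊆ [m], a_J = Σ_{I ∈ K^f_J} (1 − χ(lk_{K^f_J} I)) a_I, where χ is the (non-reduced) Euler characteristic and lk denotes the link. -/
/-!
STATEMENT 1: With `K` a simplicial complex on `[m]` and `a_J` a family satisfying
`a_{A∪B} = a_A + a_B − a_{A∩B}` whenever `K_{A∪B} = K_A ∪ K_B`, for every `J ⊆ [m]` we have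
`a_J = Σ_{I ∈ K^f_J} (1 − χ(lk_{K^f_J} I)) a_I`,
where `χ(L) = Σ_{∅≠A∈L} (−1)^{|A|+1}` is the (non-reduced) Euler characteristic and
`lk_L I = {A : A ∩ I = ∅, A ∪ I ∈ L}`.
-/

/-- The Euler characteristic of a (finite) simplicial complex, given as the finite set of its
faces (including the empty face): `χ(L) = Σ_{∅ ≠ A ∈ L} (−1)^{|A|+1}`. -/
def eulerChar {m : ℕ} (L : Finset (Finset (Fin m))) : ℤ :=
  ∑ A ∈ L.filter (fun A => A.Nonempty), (-1 : ℤ) ^ (A.card + 1)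

/-- The link of a face `I` in the complex `L` (a finite set of faces):
`lk_L I = {A : A ∩ I = ∅, A ∪ I ∈ L}`, where `A` ranges over subsets of the vertex set. -/
def linkOf {m : ℕ} (L : Finset (Finset (Fin m))) (I : Finset (Fin m)) :
    Finset (Finset (Fin m)) :=
  (Finset.univ : Finset (Finset (Fin m))).filter (fun A => A ∩ I = ∅ ∧ A ∪ I ∈ L)

section Aux
variable {m : ℕ}

lemma linkOf_union (L1 L2 : Finset (Finset (Fin m))) (I : Finset (Fin m)) :
    linkOf (L1 ∪ L2) I = linkOf L1 I ∪ linkOf L2 I := by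
  ext A; simp [linkOf]; tauto

lemma linkOf_inter (L1 L2 : Finset (Finset (Fin m))) (I : Finset (Fin m)) :
    linkOf (L1 ∩ L2) I = linkOf L1 I ∩ linkOf L2 I := by
  ext A; simp [linkOf]; tauto

lemma eulerChar_union_inter (L1 L2 : Finset (Finset (Fin m))) :
    eulerChar (L1 ∪ L2) + eulerChar (L1 ∩ L2) = eulerChar L1 + eulerChar L2 := by
  unfold eulerChar
  rw [Finset.filter_union, Finset.filter_inter_distrib]
  exact Finset.sum_union_inter

lemma eulerChar_powerset (X : Finset (Fin m)) :
    eulerChar X.powerset = if X = ∅ then 0 else 1 := by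
  have h := Finset.sum_powerset_neg_one_pow_card (x := X)
  rw [← Finset.sum_filter_add_sum_filter_not X.powerset (fun A => A.Nonempty)] at h
  have h2 : X.powerset.filter (fun A => ¬ A.Nonempty) = {∅} := by
    ext A
    simp [Finset.not_nonempty_iff_eq_empty]
    rintro rfl; exact Finset.empty_subset X
  rw [h2, Finset.sum_singleton] at h
  simp only [Finset.card_empty, pow_zero] at h
  unfold eulerChar
  have : ∑ A ∈ X.powerset.filter (fun A => A.Nonempty), (-1:ℤ)^(A.card+1)
      = - ∑ A ∈ X.powerset.filter (fun A => A.Nonempty), (-1:ℤ)^A.card := by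
    rw [← Finset.sum_neg_distrib]
    exact Finset.sum_congr rfl (fun A _ => by ring)
  rw [this]
  split_ifs with hX
  · subst hX
    simp [Finset.powerset_empty, Finset.filter_singleton]
  · rw [if_neg hX] at h
    omega

end Aux

section Main
variable {m : ℕ}

def flagF (K : Finset (Finset (Fin m))) (X : Finset (Fin m)) : Finset (Finset (Fin m)) :=
  X.powerset.filter (fun B => ∀ i ∈ B, ∀ j ∈ B, i ≠ j → ({i, j} : Finset (Fin m)) ∈ K)

lemma mem_flagF {K : Finset (Finset (Fin m))} {X I : Finset (Fin m)} :
    I ∈ flagF K X ↔ I ⊆ X ∧ ∀ i ∈ I, ∀ j ∈ I, i ≠ j → ({i, j} : Finset (Fin m)) ∈ K := by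
  simp [flagF]

lemma key {G : Type*} [AddCommGroup G]
    (K : Finset (Finset (Fin m)))
    (hdown : ∀ σ ∈ K, ∀ τ ⊆ σ, τ ∈ K)
    (a : Finset (Fin m) → G)
    (hadd : ∀ S T : Finset (Fin m),
      (∀ σ ∈ K, σ ⊆ S ∪ T → σ ⊆ S ∨ σ ⊆ T) →
      a (S ∪ T) = a S + a T - a (S ∩ T)) :
    ∀ J : Finset (Fin m),
      a J = ∑ I ∈ flagF K J, (1 - eulerChar (linkOf (flagF K J) I)) • a I := by
  intro J
  induction J using Finset.strongInduction with
  | _ J ih =>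
    by_cases hc : ∀ i ∈ J, ∀ j ∈ J, i ≠ j → ({i, j} : Finset (Fin m)) ∈ K
    · -- clique case
      have hfl : flagF K J = J.powerset := by
        apply Finset.filter_true_of_mem
        intro B hB i hi j hj hij
        exact hc i (Finset.mem_powerset.mp hB hi) j (Finset.mem_powerset.mp hB hj) hij
      rw [hfl]
      have hlink : ∀ I ∈ J.powerset, linkOf J.powerset I = (J \ I).powerset := by
        intro I hI
        have hIJ := Finset.mem_powerset.mp hI
        ext A
        simp only [linkOf, Finset.mem_filter, Finset.mem_univ, true_and,
          Finset.mem_powerset, Finset.subset_sdiff, Finset.union_subset_iff,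
          ← Finset.disjoint_iff_inter_eq_empty]
        tauto
      rw [Finset.sum_congr rfl (fun I hI => by
        rw [hlink I hI, eulerChar_powerset])]
      have : ∀ I ∈ J.powerset,
          (1 - if J \ I = ∅ then (0:ℤ) else 1) • a I = if I = J then a I else 0 := by
        intro I hI
        have hIJ := Finset.mem_powerset.mp hI
        have : J \ I = ∅ ↔ I = J := by
          rw [Finset.sdiff_eq_empty_iff_subset]
          exact ⟨fun h => Finset.Subset.antisymm hIJ h, fun h => h ▸ Finset.Subset.refl J⟩
        by_cases h : I = J
        · rw [if_pos (this.mpr h), if_pos h]; simp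
        · rw [if_neg (fun he => h (this.mp he)), if_neg h]; simp
      rw [Finset.sum_congr rfl this, Finset.sum_ite_eq' J.powerset J a,
        if_pos (Finset.mem_powerset.mpr (Finset.Subset.refl J))]
    · -- non-clique case
      push_neg at hc
      obtain ⟨i, hiJ, j, hjJ, hij, hK⟩ := hc
      set S := J.erase i with hS
      set T := J.erase j with hT
      have hSsub : S ⊂ J := Finset.erase_ssubset hiJ
      have hTsub : T ⊂ J := Finset.erase_ssubset hjJ
      have hSTsub : S ∩ T ⊂ J := lt_of_le_of_lt inf_le_left hSsub
      have hunionJ : S ∪ T = J := by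
        ext x
        simp only [Finset.mem_union, hS, hT, Finset.mem_erase]
        constructor
        · rintro (⟨_, h⟩ | ⟨_, h⟩) <;> assumption
        · intro hx
          by_cases hxi : x = i
          · exact Or.inr ⟨by rw [hxi]; exact hij, hx⟩
          · exact Or.inl ⟨hxi, hx⟩
      have haJ : a J = a S + a T - a (S ∩ T) := by
        rw [← hunionJ]
        apply hadd
        intro σ hσ hσJ
        rw [hunionJ] at hσJ
        by_contra hcon
        push_neg at hcon
        obtain ⟨h1, h2⟩ := hcon
        have hiσ : i ∈ σ := by
          by_contra hiσ
          exact h1 (Finset.subset_erase.mpr ⟨hσJ, hiσ⟩)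
        have hjσ : j ∈ σ := by
          by_contra hjσ
          exact h2 (Finset.subset_erase.mpr ⟨hσJ, hjσ⟩)
        exact hK (hdown σ hσ {i, j} (Finset.insert_subset hiσ (Finset.singleton_subset_iff.mpr hjσ)))
      -- flag complex decompositions
      have hFS : flagF K S = (flagF K J).filter (fun I => i ∉ I) := by
        ext I
        simp only [mem_flagF, Finset.mem_filter, hS, Finset.subset_erase, mem_flagF]
        tauto
      have hFT : flagF K T = (flagF K J).filter (fun I => j ∉ I) := by
        ext I
        simp only [mem_flagF, Finset.mem_filter, hT, Finset.subset_erase, mem_flagF]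
        tauto
      have hFST : flagF K (S ∩ T) = (flagF K J).filter (fun I => i ∉ I ∧ j ∉ I) := by
        ext I
        simp only [mem_flagF, Finset.mem_filter, hS, hT, Finset.subset_inter_iff,
          Finset.subset_erase]
        tauto
      have hFunion : flagF K J = flagF K S ∪ flagF K T := by
        ext I
        simp only [Finset.mem_union, mem_flagF, hS, hT, Finset.subset_erase]
        constructor
        · rintro ⟨hIJ, hcl⟩
          by_cases hiI : i ∈ I
          · refine Or.inr ⟨⟨hIJ, fun hjI => hK (hcl i hiI j hjI hij)⟩, hcl⟩
          · exact Or.inl ⟨⟨hIJ, hiI⟩, hcl⟩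
        · rintro (⟨⟨hIJ, _⟩, hcl⟩ | ⟨⟨hIJ, _⟩, hcl⟩) <;> exact ⟨hIJ, hcl⟩
      have hFinter : flagF K S ∩ flagF K T = flagF K (S ∩ T) := by
        ext I
        simp only [Finset.mem_inter, mem_flagF, Finset.subset_inter_iff]
        tauto
      -- rewrite the three sums as sums over flagF K J
      rw [haJ, ih S hSsub, ih T hTsub, ih _ hSTsub]
      rw [hFS, hFT, hFST, Finset.sum_filter, Finset.sum_filter, Finset.sum_filter,
        ← Finset.sum_add_distrib, ← Finset.sum_sub_distrib]
      apply Finset.sum_congr rfl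
      intro I hI
      obtain ⟨hIJ, hcl⟩ := mem_flagF.mp hI
      by_cases hiI : i ∈ I
      · have hjI : j ∉ I := fun hjI => hK (hcl i hiI j hjI hij)
        rw [if_neg (by simp [hiI]), if_pos hjI, if_neg (by simp [hiI])]
        have hlk : linkOf (flagF K J) I = linkOf (flagF K T) I := by
          ext A
          simp only [linkOf, Finset.mem_filter, Finset.mem_univ, true_and]
          constructor
          · rintro ⟨hAI, hAU⟩
            refine ⟨hAI, ?_⟩
            obtain ⟨hUJ, hUcl⟩ := mem_flagF.mp hAU
            have hiU : i ∈ A ∪ I := Finset.mem_union_right A hiI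
            have hjU : j ∉ A ∪ I := fun hjU => hK (hUcl i hiU j hjU hij)
            exact mem_flagF.mpr ⟨Finset.subset_erase.mpr ⟨hUJ, hjU⟩, hUcl⟩
          · rintro ⟨hAI, hAU⟩
            obtain ⟨hUT, hUcl⟩ := mem_flagF.mp hAU
            exact ⟨hAI, mem_flagF.mpr ⟨hUT.trans (Finset.erase_subset _ _), hUcl⟩⟩
        rw [← hFT, hlk]
        abel
      · by_cases hjI : j ∈ I
        · rw [if_pos hiI, if_neg (by simp [hjI]), if_neg (by simp [hjI])]
          have hlk : linkOf (flagF K J) I = linkOf (flagF K S) I := by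
            ext A
            simp only [linkOf, Finset.mem_filter, Finset.mem_univ, true_and]
            constructor
            · rintro ⟨hAI, hAU⟩
              refine ⟨hAI, ?_⟩
              obtain ⟨hUJ, hUcl⟩ := mem_flagF.mp hAU
              have hjU : j ∈ A ∪ I := Finset.mem_union_right A hjI
              have hiU : i ∉ A ∪ I := fun hiU => hK (hUcl i hiU j hjU hij)
              exact mem_flagF.mpr ⟨Finset.subset_erase.mpr ⟨hUJ, hiU⟩, hUcl⟩
            · rintro ⟨hAI, hAU⟩
              obtain ⟨hUS, hUcl⟩ := mem_flagF.mp hAU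
              exact ⟨hAI, mem_flagF.mpr ⟨hUS.trans (Finset.erase_subset _ _), hUcl⟩⟩
          rw [← hFS, hlk]
          abel
        · rw [if_pos hiI, if_pos hjI, if_pos ⟨hiI, hjI⟩, ← hFS, ← hFT, ← hFST]
          have hcoef : (1 - eulerChar (linkOf (flagF K J) I))
              = (1 - eulerChar (linkOf (flagF K S) I))
                + (1 - eulerChar (linkOf (flagF K T) I))
                - (1 - eulerChar (linkOf (flagF K (S ∩ T)) I)) := by
            have h1 : linkOf (flagF K J) I
                = linkOf (flagF K S) I ∪ linkOf (flagF K T) I := by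
              rw [hFunion, linkOf_union]
            have h2 : linkOf (flagF K S) I ∩ linkOf (flagF K T) I
                = linkOf (flagF K (S ∩ T)) I := by
              rw [← linkOf_inter, hFinter]
            have h3 := eulerChar_union_inter (linkOf (flagF K S) I) (linkOf (flagF K T) I)
            rw [h2] at h3
            rw [h1]
            linarith
          rw [hcoef]
          simp only [sub_smul, add_smul, one_smul]


theorem stmt1 {m : ℕ} (G : Type*) [AddCommGroup G]
    (K : Finset (Finset (Fin m)))
    (hdown : ∀ σ ∈ K, ∀ τ ⊆ σ, τ ∈ K)
    (a : Finset (Fin m) → G)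
    (hadd : ∀ S T : Finset (Fin m),
      (∀ σ ∈ K, σ ⊆ S ∪ T → σ ⊆ S ∨ σ ⊆ T) →
      a (S ∪ T) = a S + a T - a (S ∩ T)) :
    ∀ J : Finset (Fin m),
      a J = ∑ I ∈ J.powerset.filter
          (fun I => ∀ i ∈ I, ∀ j ∈ I, i ≠ j → ({i, j} : Finset (Fin m)) ∈ K),
        (1 - eulerChar (linkOf
            (J.powerset.filter
              (fun B => ∀ i ∈ B, ∀ j ∈ B, i ≠ j → ({i, j} : Finset (Fin m)) ∈ K)) I)) • a I :=
  key K hdown a hadd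
end Main
end

section
/- Let K be a simplicial complex on [m] and L ∈ AMF(K) an almost missing face (∂²Δ_L ⊆ K_L ⊊ ∂Δ_L). Then in H̃_{|L|−3}(K_L; k) one has the relation Σ_{i ∈ L, L∖{i} ∉ K} (−1)^{|L_{<i}|} [∂Δ_{L∖{i}}] = 0, where each L∖{i} with L∖{i} ∉ K is a missing face of K_L. -/
/-!
STATEMENT 5: let `L ∈ AMF(K)` be an almost missing face of a simplicial complex `K` on `[m]`
(`∂²Δ_L ⊆ K_L ⊊ ∂Δ_L`).  Then each `L∖{i}` with `L∖{i} ∉ K` is a missing face of `K_L`, and in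
`H̃_{|L|−3}(K_L; k)` the relation
`Σ_{i ∈ L, L∖{i} ∉ K} (−1)^{|L_{<i}|} [∂Δ_{L∖{i}}] = 0`
holds; i.e. the corresponding cycle is the boundary of a chain supported on `K_L`.
-/

/-- The boundary operator of the augmented simplicial chain complex on `Fin m`. -/
noncomputable def simplicialBoundary (k : Type*) [CommRing k] (m : ℕ) :
    (Finset (Fin m) →₀ k) →ₗ[k] (Finset (Fin m) →₀ k) :=
  Finsupp.lsum k fun J => LinearMap.toSpanSingleton k _
    (∑ j ∈ J, ((-1 : k) ^ ((J.filter (· < j)).card)) • Finsupp.single (J.erase j) (1 : k))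

/-- The cycle `c_I = Σ_{i∈I} (−1)^{|I_{<i}|} e_{I∖{i}}` representing `[∂Δ_I]`. -/
noncomputable def missingFaceChain (k : Type*) [CommRing k] {m : ℕ} (I : Finset (Fin m)) :
    Finset (Fin m) →₀ k :=
  ∑ i ∈ I, ((-1 : k) ^ ((I.filter (· < i)).card)) • Finsupp.single (I.erase i) (1 : k)

lemma boundary_single (k : Type*) [CommRing k] {m : ℕ} (J : Finset (Fin m)) :
    simplicialBoundary k m (Finsupp.single J (1 : k)) = missingFaceChain k J := by
  rw [simplicialBoundary, Finsupp.lsum_single, LinearMap.toSpanSingleton_apply, one_smul,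
    missingFaceChain]

lemma sign_cancel (k : Type*) [CommRing k] {m : ℕ} {L : Finset (Fin m)} {i j : Fin m}
    (hi : i ∈ L) (hij : i < j) :
    (-1 : k) ^ ((L.filter (· < i)).card) * (-1 : k) ^ (((L.erase i).filter (· < j)).card)
      + (-1 : k) ^ ((L.filter (· < j)).card) * (-1 : k) ^ (((L.erase j).filter (· < i)).card)
      = 0 := by
  have h1 : (L.erase i).filter (· < j) = (L.filter (· < j)).erase i :=
    Finset.filter_erase _ _ _
  have h2 : (L.erase j).filter (· < i) = L.filter (· < i) := by
    rw [Finset.filter_erase, Finset.erase_eq_of_notMem]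
    simp only [Finset.mem_filter]
    rintro ⟨-, hc⟩
    exact absurd hij (not_lt_of_gt hc)
  have hmem : i ∈ L.filter (· < j) := Finset.mem_filter.2 ⟨hi, hij⟩
  have h3 : ((L.filter (· < j)).erase i).card + 1 = (L.filter (· < j)).card :=
    Finset.card_erase_add_one hmem
  rw [h1, h2, ← h3, pow_succ]
  ring

/-- The key cancellation: `∂ ∘ ∂ = 0` applied to a single face. -/
lemma key_cancel (k : Type*) [CommRing k] {m : ℕ} (L : Finset (Fin m)) :
    ∑ i ∈ L, ((-1 : k) ^ ((L.filter (· < i)).card)) • missingFaceChain k (L.erase i) = 0 := by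
  simp only [missingFaceChain, Finset.smul_sum, smul_smul]
  rw [Finset.sum_sigma']
  refine Finset.sum_involution (fun p _ => ⟨p.2, p.1⟩) ?_ ?_ ?_ ?_
  · rintro ⟨i, j⟩ hp
    simp only [Finset.mem_sigma, Finset.mem_erase] at hp
    obtain ⟨hi, hji, hj⟩ := hp
    have herase : (L.erase i).erase j = (L.erase j).erase i := Finset.erase_right_comm
    rw [herase, ← add_smul]
    rcases lt_or_gt_of_ne hji.symm with h | h
    · rw [sign_cancel k hi h]; simp
    · rw [add_comm, sign_cancel k hj h]; simp
  · rintro ⟨i, j⟩ hp _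
    simp only [Finset.mem_sigma, Finset.mem_erase] at hp
    intro hcontra
    have := congrArg Sigma.fst hcontra
    simp only at this
    exact hp.2.1 (this ▸ rfl)
  · rintro ⟨i, j⟩ hp
    simp only [Finset.mem_sigma, Finset.mem_erase] at hp ⊢
    exact ⟨hp.2.2, fun h => hp.2.1 h.symm, hp.1⟩
  · rintro ⟨i, j⟩ hp
    rfl

theorem stmt5 (k : Type*) [CommRing k] {m : ℕ}
    (K : Finset (Finset (Fin m)))
    (hdown : ∀ σ ∈ K, ∀ τ ⊆ σ, τ ∈ K)
    (L : Finset (Fin m))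
    -- `L` is an almost missing face: `∂²Δ_L ⊆ K_L ⊊ ∂Δ_L`
    (hL1 : L ∉ K)
    (hL2 : ∀ J ⊆ L, J.card + 2 ≤ L.card → J ∈ K)
    (hL3 : ∃ J ⊂ L, J ∉ K) :
    -- each `L∖{i}` with `L∖{i} ∉ K` is a missing face of `K_L`
    (∀ i ∈ L, L.erase i ∉ K → ∀ J ⊂ L.erase i, J ∈ K ∧ J ⊆ L) ∧
    -- the relation `Σ (−1)^{|L_{<i}|} [∂Δ_{L∖{i}}] = 0` in `H̃_{|L|−3}(K_L; k)`:
    -- the cycle is a boundary of a chain supported on the faces of `K_L`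
    ∃ φ : Finset (Fin m) →₀ k,
      (∀ σ ∈ φ.support, σ ∈ K ∧ σ ⊆ L) ∧
      simplicialBoundary k m φ =
        ∑ i ∈ L.filter (fun i => L.erase i ∉ K),
          ((-1 : k) ^ ((L.filter (· < i)).card)) • missingFaceChain k (L.erase i) := by
  classical
  constructor
  · intro i hi _ J hJ
    have hJL : J ⊆ L := hJ.subset.trans (Finset.erase_subset _ _)
    refine ⟨hL2 J hJL ?_, hJL⟩
    have h1 : J.card < (L.erase i).card := Finset.card_lt_card hJ
    have h2 : (L.erase i).card = L.card - 1 := Finset.card_erase_of_mem hi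
    have h3 : 1 ≤ L.card := Finset.card_pos.2 ⟨i, hi⟩
    omega
  · refine ⟨-∑ i ∈ L.filter (fun i => L.erase i ∈ K),
      ((-1 : k) ^ ((L.filter (· < i)).card)) • Finsupp.single (L.erase i) (1 : k), ?_, ?_⟩
    · intro σ hσ
      rw [Finsupp.support_neg] at hσ
      obtain ⟨i, hi, hσi⟩ := Finsupp.mem_support_finset_sum σ hσ
      have h1 : σ ∈ ({L.erase i} : Finset (Finset (Fin m))) :=
        Finsupp.support_single_subset (Finsupp.support_smul hσi)
      simp only [Finset.mem_singleton] at h1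
      subst h1
      simp only [Finset.mem_filter] at hi
      exact ⟨hi.2, Finset.erase_subset _ _⟩
    · rw [map_neg, map_sum]
      simp only [map_smul, boundary_single]
      have hsplit := Finset.sum_filter_add_sum_filter_not L (fun i => L.erase i ∈ K)
        (fun i => ((-1 : k) ^ ((L.filter (· < i)).card)) • missingFaceChain k (L.erase i))
      rw [key_cancel] at hsplit
      have : ∑ i ∈ L.filter (fun i => ¬(L.erase i ∈ K)),
          ((-1 : k) ^ ((L.filter (· < i)).card)) • missingFaceChain k (L.erase i)
          = -∑ i ∈ L.filter (fun i => L.erase i ∈ K),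
          ((-1 : k) ^ ((L.filter (· < i)).card)) • missingFaceChain k (L.erase i) := by
        linear_combination (norm := abel) hsplit
      rw [this]
end

section
/- For any 0 ≤ d ≤ m−1, the d-skeleton K = sk_d Δ_{[m]} of the (m−1)-simplex is HMF-presented over any commutative ring k: for each nonempty J ⊆ [m], the sequence ⊕_{L ∈ AMF(K_J)} k·ρ_L → ⊕_{I ∈ MF(K_J)} k·x_I → H̃_*(K_J; k) → 0 is exact, where the second map sends x_I to [∂Δ_I] and ρ_L maps to Σ_{i∈L, L∖i∉K}(−1)^{|L_{<i}|}x_{L∖i}. -/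
namespace Stmt6Aux

noncomputable def sgn (k : Type*) [CommRing k] {m : ℕ} (σ : Finset (Fin m)) (j : Fin m) : k :=
  (-1) ^ ((σ.filter (· < j)).card)

variable {k : Type*} [CommRing k] {m : ℕ}

lemma mfc_eq (I : Finset (Fin m)) :
    missingFaceChain k I = ∑ i ∈ I, sgn k I i • Finsupp.single (I.erase i) 1 := rfl

lemma bdry_apply (z : Finset (Fin m) →₀ k) :
    simplicialBoundary k m z = z.sum fun σ c => c • missingFaceChain k σ := by
  simp only [simplicialBoundary, Finsupp.lsum_apply]
  rfl

lemma bdry_single (σ : Finset (Fin m)) :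
    simplicialBoundary k m (Finsupp.single σ (1:k)) = missingFaceChain k σ := by
  simp [simplicialBoundary, missingFaceChain]

lemma card_filter_erase {σ : Finset (Fin m)} {j : Fin m} (hj : j ∈ σ) (t : Fin m) :
    ((σ.filter (· < t)).card) = ((σ.erase j).filter (· < t)).card + (if j < t then 1 else 0) := by
  rw [Finset.filter_erase]
  by_cases h : j < t
  · have hm : j ∈ σ.filter (· < t) := Finset.mem_filter.2 ⟨hj, h⟩
    have h1 : 0 < (σ.filter (· < t)).card := Finset.card_pos.2 ⟨j, hm⟩
    rw [if_pos h, Finset.card_erase_of_mem hm]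
    omega
  · rw [if_neg h, Finset.erase_eq_of_notMem (by simp [Finset.mem_filter, h]), add_zero]

lemma card_filter_insert {σ : Finset (Fin m)} {j0 : Fin m} (hj0 : j0 ∉ σ) (t : Fin m) :
    (((insert j0 σ).filter (· < t)).card) = (σ.filter (· < t)).card + (if j0 < t then 1 else 0) := by
  rw [Finset.filter_insert]
  by_cases h : j0 < t
  · rw [if_pos h, if_pos h, Finset.card_insert_of_notMem (by simp [Finset.mem_filter, hj0])]
  · rw [if_neg h, if_neg h, add_zero]

lemma sgn_erase {σ : Finset (Fin m)} {j : Fin m} (hj : j ∈ σ) (t : Fin m) :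
    sgn k (σ.erase j) t = sgn k σ t * (-1) ^ (if j < t then 1 else 0) := by
  unfold sgn
  rw [card_filter_erase hj t, pow_add, mul_assoc, ← pow_add,
    Even.neg_one_pow ⟨(if j < t then 1 else 0), rfl⟩, mul_one]

lemma sgn_insert {σ : Finset (Fin m)} {j0 : Fin m} (hj0 : j0 ∉ σ) (t : Fin m) :
    sgn k (insert j0 σ) t = sgn k σ t * (-1) ^ (if j0 < t then 1 else 0) := by
  unfold sgn
  rw [card_filter_insert hj0 t, pow_add]

lemma sgn_sq (σ : Finset (Fin m)) (t : Fin m) : sgn k σ t * sgn k σ t = 1 := by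
  unfold sgn
  rw [← pow_add]
  exact Even.neg_one_pow ⟨_, rfl⟩

lemma ite_pow_cancel {i j : Fin m} (hij : i ≠ j) :
    ((-1:k) ^ (if j < i then 1 else 0)) + (-1:k) ^ (if i < j then 1 else 0) = 0 := by
  rcases hij.lt_or_gt with h | h
  · simp [h, lt_asymm h]
  · simp [h, lt_asymm h]

lemma sgn_pair {σ : Finset (Fin m)} {i j : Fin m} (hi : i ∈ σ) (hj : j ∈ σ) (hij : i ≠ j) :
    sgn k σ j * sgn k (σ.erase j) i + sgn k σ i * sgn k (σ.erase i) j = 0 := by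
  rw [sgn_erase hj i, sgn_erase hi j]
  linear_combination (sgn k σ j * sgn k σ i) * ite_pow_cancel (k := k) hij

lemma sgn_pair_insert {σ : Finset (Fin m)} {j0 j : Fin m} (hj0 : j0 ∉ σ) (hj : j ∈ σ) :
    sgn k σ j0 * sgn k (insert j0 σ) j + sgn k σ j * sgn k (σ.erase j) j0 = 0 := by
  have hne : j ≠ j0 := fun h => hj0 (h ▸ hj)
  rw [sgn_insert hj0 j, sgn_erase hj j0]
  linear_combination (sgn k σ j0 * sgn k σ j) * ite_pow_cancel (k := k) hne

noncomputable def cone (k : Type*) [CommRing k] {m : ℕ} (j0 : Fin m) :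
    (Finset (Fin m) →₀ k) →ₗ[k] (Finset (Fin m) →₀ k) :=
  Finsupp.lsum k fun σ => LinearMap.toSpanSingleton k _
    (if j0 ∈ σ then 0 else sgn k σ j0 • Finsupp.single (insert j0 σ) 1)

lemma cone_single (j0 : Fin m) (σ : Finset (Fin m)) :
    cone k j0 (Finsupp.single σ (1:k)) =
      if j0 ∈ σ then 0 else sgn k σ j0 • Finsupp.single (insert j0 σ) 1 := by
  simp [cone]

lemma cone_apply (j0 : Fin m) (z : Finset (Fin m) →₀ k) :
    cone k j0 z = z.sum fun σ c =>
      c • (if j0 ∈ σ then 0 else sgn k σ j0 • Finsupp.single (insert j0 σ) 1) := by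
  simp only [cone, Finsupp.lsum_apply]
  rfl

lemma homotopy_single (j0 : Fin m) (σ : Finset (Fin m)) :
    simplicialBoundary k m (cone k j0 (Finsupp.single σ 1)) +
      cone k j0 (simplicialBoundary k m (Finsupp.single σ 1)) = Finsupp.single σ 1 := by
  rw [bdry_single, mfc_eq, map_sum]
  by_cases hj0 : j0 ∈ σ
  · rw [cone_single, if_pos hj0, map_zero, zero_add]
    rw [Finset.sum_eq_single j0 (fun i hi hne => by
        rw [map_smul, cone_single, if_pos (Finset.mem_erase.2 ⟨Ne.symm hne, hj0⟩), smul_zero])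
      (fun h => absurd hj0 h)]
    rw [map_smul, cone_single, if_neg (Finset.notMem_erase _ _), Finset.insert_erase hj0,
      smul_smul]
    rw [sgn_erase hj0 j0, if_neg (lt_irrefl j0), pow_zero, mul_one, sgn_sq, one_smul]
  · rw [cone_single, if_neg hj0, map_smul, bdry_single, mfc_eq, Finset.sum_insert hj0,
      Finset.erase_insert hj0, smul_add, smul_smul,
      sgn_insert hj0 j0, if_neg (lt_irrefl j0), pow_zero, mul_one, sgn_sq, one_smul]
    have h1 : ∀ j ∈ σ, (sgn k σ j0) • (sgn k (insert j0 σ) j • Finsupp.single ((insert j0 σ).erase j) (1:k))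
        = (sgn k σ j0 * sgn k (insert j0 σ) j) • Finsupp.single (insert j0 (σ.erase j)) (1:k) := by
      intro j hj
      rw [smul_smul, Finset.erase_insert_of_ne (fun h => hj0 (by rw [h]; exact hj))]
    have h2 : ∀ j ∈ σ, cone k j0 (sgn k σ j • Finsupp.single (σ.erase j) (1:k))
        = (sgn k σ j * sgn k (σ.erase j) j0) • Finsupp.single (insert j0 (σ.erase j)) (1:k) := by
      intro j hj
      rw [map_smul, cone_single, if_neg (fun h => hj0 (Finset.mem_of_mem_erase h)), smul_smul]
    have hkey : (sgn k σ j0 • ∑ x ∈ σ, sgn k (insert j0 σ) x • Finsupp.single ((insert j0 σ).erase x) (1:k))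
        + ∑ x ∈ σ, cone k j0 (sgn k σ x • Finsupp.single (σ.erase x) (1:k)) = 0 := by
      rw [Finset.smul_sum, Finset.sum_congr rfl h1, Finset.sum_congr rfl h2,
        ← Finset.sum_add_distrib]
      refine Finset.sum_eq_zero fun j hj => ?_
      rw [← add_smul, sgn_pair_insert hj0 hj, zero_smul]
    rw [add_assoc, hkey, add_zero]

lemma homotopy (j0 : Fin m) (z : Finset (Fin m) →₀ k) :
    simplicialBoundary k m (cone k j0 z) + cone k j0 (simplicialBoundary k m z) = z := by
  have h : ((simplicialBoundary k m) ∘ₗ (cone k j0)) + ((cone k j0) ∘ₗ (simplicialBoundary k m))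
      = (LinearMap.id : (Finset (Fin m) →₀ k) →ₗ[k] _) := by
    apply Finsupp.lhom_ext
    intro a b
    have hb : (Finsupp.single a b : Finset (Fin m) →₀ k) = b • Finsupp.single a 1 := by
      rw [Finsupp.smul_single, smul_eq_mul, mul_one]
    simp only [LinearMap.add_apply, LinearMap.comp_apply, LinearMap.id_apply, hb, map_smul]
    rw [homotopy_single]
  have := LinearMap.congr_fun h z
  simpa using this

lemma bdry_bdry_single (σ : Finset (Fin m)) :
    simplicialBoundary k m (simplicialBoundary k m (Finsupp.single σ (1:k))) = 0 := by
  rw [bdry_single, mfc_eq, map_sum]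
  have h : ∀ j ∈ σ, simplicialBoundary k m (sgn k σ j • Finsupp.single (σ.erase j) (1:k))
      = ∑ i ∈ σ.erase j, (sgn k σ j * sgn k (σ.erase j) i) • Finsupp.single ((σ.erase j).erase i) (1:k) := by
    intro j hj
    rw [map_smul, bdry_single, mfc_eq, Finset.smul_sum]
    exact Finset.sum_congr rfl fun i _ => smul_smul _ _ _
  rw [Finset.sum_congr rfl h, Finset.sum_sigma' σ (fun j => σ.erase j)]
  refine Finset.sum_involution (fun p _ => ⟨p.2, p.1⟩) ?_ ?_ ?_ ?_
  · rintro ⟨j, i⟩ hp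
    simp only [Finset.mem_sigma, Finset.mem_erase] at hp
    obtain ⟨hj, hij, hi⟩ := hp
    dsimp only
    rw [Finset.erase_right_comm (a := j) (b := i)]
    rw [← add_smul, sgn_pair hi hj hij, zero_smul]
  · rintro ⟨j, i⟩ hp _
    simp only [Finset.mem_sigma, Finset.mem_erase] at hp
    exact fun h => hp.2.1 (congrArg Sigma.fst h)
  · rintro ⟨j, i⟩ hp
    simp only [Finset.mem_sigma, Finset.mem_erase] at hp ⊢
    exact ⟨hp.2.2, fun h => hp.2.1 h.symm, hp.1⟩
  · rintro ⟨j, i⟩ _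
    rfl

lemma bdry_supported {s t : Set (Finset (Fin m))} {z : Finset (Fin m) →₀ k}
    (hz : ↑z.support ⊆ s) (hst : ∀ σ ∈ s, ∀ j ∈ σ, σ.erase j ∈ t) :
    ↑(simplicialBoundary k m z).support ⊆ t := by
  rw [bdry_apply]
  intro τ hτ
  obtain ⟨σ, hσ, hτ2⟩ := Finset.mem_biUnion.1 (Finsupp.support_sum (by exact_mod_cast hτ))
  have hτ3 := Finsupp.support_smul hτ2
  rw [mfc_eq] at hτ3
  obtain ⟨j, hjσ, hτ4⟩ := Finset.mem_biUnion.1 (Finsupp.support_finset_sum hτ3)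
  have hτ5 := Finsupp.support_smul hτ4
  have hτ6 : τ = σ.erase j := by
    have := Finsupp.support_single_subset hτ5
    simpa using this
  rw [hτ6]
  exact hst σ (hz hσ) j hjσ

lemma cone_supported {s t : Set (Finset (Fin m))} {j0 : Fin m} {z : Finset (Fin m) →₀ k}
    (hz : ↑z.support ⊆ s) (hst : ∀ σ ∈ s, j0 ∉ σ → (insert j0 σ : Finset (Fin m)) ∈ t) :
    ↑(cone k j0 z).support ⊆ t := by
  rw [cone_apply]
  intro τ hτ
  obtain ⟨σ, hσ, hτ2⟩ := Finset.mem_biUnion.1 (Finsupp.support_sum (by exact_mod_cast hτ))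
  by_cases hj0 : j0 ∈ σ
  · rw [if_pos hj0, smul_zero] at hτ2
    simp at hτ2
  · rw [if_neg hj0] at hτ2
    have hτ3 := Finsupp.support_smul (Finsupp.support_smul hτ2)
    have hτ4 : τ = insert j0 σ := by
      have := Finsupp.support_single_subset hτ3
      simpa using this
    rw [hτ4]
    exact hst σ (hz hσ) hj0

lemma bdry_eq_sum {S : Finset (Finset (Fin m))} {x : Finset (Fin m) →₀ k}
    (hx : x.support ⊆ S) :
    simplicialBoundary k m x = ∑ I ∈ S, x I • missingFaceChain k I := by
  rw [bdry_apply, Finsupp.sum]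
  refine Finset.sum_subset hx fun I _ hnI => ?_
  rw [Finsupp.notMem_support_iff.1 hnI, zero_smul]

end Stmt6Aux

theorem stmt6 (k : Type*) [CommRing k] (m d : ℕ) (hd : d + 1 ≤ m)
    (J : Finset (Fin m)) (hJ : J.Nonempty) :
    -- chains of the full subcomplex `K_J` of `K = sk_d Δ_{[m]}` on `J`
    let chainsJ : Submodule k (Finset (Fin m) →₀ k) :=
      Finsupp.supported k k {σ : Finset (Fin m) | σ ⊆ J ∧ σ.card ≤ d + 1}
    let MFJ : Finset (Finset (Fin m)) := J.powerset.filter (fun I => I.card = d + 2)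
    let AMFJ : Finset (Finset (Fin m)) := J.powerset.filter (fun L => L.card = d + 3)
    -- (1) surjectivity of `μ : ⊕_{I ∈ MF(K_J)} k·x_I → H̃_*(K_J; k)`:
    (∀ z : Finset (Fin m) →₀ k, z ∈ chainsJ → simplicialBoundary k m z = 0 →
      ∃ (lam : Finset (Fin m) → k) (y : Finset (Fin m) →₀ k), y ∈ chainsJ ∧
        z = (∑ I ∈ MFJ, lam I • missingFaceChain k I) + simplicialBoundary k m y) ∧
    -- (2) `im ν ⊆ ker μ`: each `ρ_L` maps to zero in homology
    (∀ L ∈ AMFJ,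
      ∃ y ∈ chainsJ, simplicialBoundary k m y =
        ∑ i ∈ L, ((-1 : k) ^ ((L.filter (· < i)).card)) • missingFaceChain k (L.erase i)) ∧
    -- (3) `ker μ ⊆ im ν`: if a combination of missing-face cycles is a boundary of a chain of
    -- `K_J`, its coefficient vector is a combination of the vectors `ρ_L`, `L ∈ AMF(K_J)`
    (∀ lam : Finset (Fin m) → k,
      (∃ y ∈ chainsJ, simplicialBoundary k m y = ∑ I ∈ MFJ, lam I • missingFaceChain k I) →
      ∃ mu : Finset (Fin m) → k, ∀ I ∈ MFJ,
        lam I = ∑ L ∈ AMFJ, ∑ i ∈ L,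
          (if L.erase i = I then mu L * (-1 : k) ^ ((L.filter (· < i)).card) else 0)) := by
  classical
  intro chainsJ MFJ AMFJ
  obtain ⟨j0, hj0⟩ := hJ
  refine ⟨?_, ?_, ?_⟩
  · -- (1)
    intro z hz hbz
    have hzs : ↑z.support ⊆ {σ : Finset (Fin m) | σ ⊆ J ∧ σ.card ≤ d + 1} :=
      (Finsupp.mem_supported k z).1 hz
    set w := Stmt6Aux.cone k j0 z with hwdef
    have hws : ↑w.support ⊆ {σ : Finset (Fin m) | σ ⊆ J ∧ σ.card ≤ d + 2} := by
      refine Stmt6Aux.cone_supported hzs ?_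
      rintro σ ⟨hσJ, hσc⟩ hj0σ
      exact ⟨Finset.insert_subset hj0 hσJ, by rw [Finset.card_insert_of_notMem hj0σ]; omega⟩
    have hzw : z = simplicialBoundary k m w := by
      have h := Stmt6Aux.homotopy j0 z
      rw [hbz, map_zero, add_zero] at h
      exact h.symm
    set w1 := Finsupp.filter (fun σ : Finset (Fin m) => σ.card = d + 2) w with hw1
    set w2 := Finsupp.filter (fun σ : Finset (Fin m) => ¬ σ.card = d + 2) w with hw2
    have hwsum : w1 + w2 = w := Finsupp.filter_pos_add_filter_neg w _
    have hw1s : w1.support ⊆ MFJ := by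
      intro τ hτ
      rw [hw1, Finsupp.support_filter, Finset.mem_filter] at hτ
      have h2 := hws (by exact_mod_cast hτ.1)
      show τ ∈ J.powerset.filter (fun I => I.card = d + 2)
      exact Finset.mem_filter.2 ⟨Finset.mem_powerset.2 h2.1, hτ.2⟩
    have hw2s : w2 ∈ chainsJ := by
      show w2 ∈ Finsupp.supported k k {σ : Finset (Fin m) | σ ⊆ J ∧ σ.card ≤ d + 1}
      rw [Finsupp.mem_supported]
      intro τ hτ
      have hτ' : τ ∈ w.support.filter (fun σ => ¬ σ.card = d + 2) := by
        rw [hw2, Finsupp.support_filter] at hτ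
        exact_mod_cast hτ
      rw [Finset.mem_filter] at hτ'
      have h2 := hws (by exact_mod_cast hτ'.1)
      have h3 := hτ'.2
      have h4 := h2.2
      exact ⟨h2.1, by omega⟩
    refine ⟨fun I => w1 I, w2, hw2s, ?_⟩
    rw [hzw, ← hwsum, map_add, Stmt6Aux.bdry_eq_sum hw1s]
  · -- (2)
    intro L _
    refine ⟨0, Submodule.zero_mem _, ?_⟩
    rw [map_zero]
    have h := Stmt6Aux.bdry_bdry_single (k := k) L
    rw [Stmt6Aux.bdry_single, Stmt6Aux.mfc_eq, map_sum] at h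
    simp only [map_smul, Stmt6Aux.bdry_single] at h
    unfold Stmt6Aux.sgn at h
    exact h.symm
  · -- (3)
    intro lam hex
    obtain ⟨y, hy, hby⟩ := hex
    have hys : ↑y.support ⊆ {σ : Finset (Fin m) | σ ⊆ J ∧ σ.card ≤ d + 1} :=
      (Finsupp.mem_supported k y).1 hy
    set u : Finset (Fin m) →₀ k := ∑ I ∈ MFJ, lam I • Finsupp.single I 1 with hu
    have hus : ↑u.support ⊆ {σ : Finset (Fin m) | σ ⊆ J ∧ σ.card ≤ d + 2} := by
      intro τ hτ
      obtain ⟨I, hI, hτ2⟩ := Finset.mem_biUnion.1 (Finsupp.support_finset_sum (by exact_mod_cast hτ))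
      have hτ3 : τ = I := by simpa using Finsupp.support_single_subset (Finsupp.support_smul hτ2)
      have hI' : I ∈ J.powerset.filter (fun I => I.card = d + 2) := hI
      rw [Finset.mem_filter, Finset.mem_powerset] at hI'
      rw [hτ3]
      exact ⟨hI'.1, by omega⟩
    set c : Finset (Fin m) →₀ k := u - y with hc
    have hcs : ↑c.support ⊆ {σ : Finset (Fin m) | σ ⊆ J ∧ σ.card ≤ d + 2} := by
      intro τ hτ
      have h1 := Finsupp.support_sub (by exact_mod_cast hτ : τ ∈ (u - y).support)
      rcases Finset.mem_union.1 h1 with h | h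
      · exact hus (by exact_mod_cast h)
      · obtain ⟨ha, hb⟩ := hys (by exact_mod_cast h)
        exact ⟨ha, by omega⟩
    have hbu : simplicialBoundary k m u = ∑ I ∈ MFJ, lam I • missingFaceChain k I := by
      rw [hu, map_sum]
      exact Finset.sum_congr rfl fun I _ => by rw [map_smul, Stmt6Aux.bdry_single]
    have hbc : simplicialBoundary k m c = 0 := by
      rw [hc, map_sub, hbu, hby, sub_self]
    have hcw : c = simplicialBoundary k m (Stmt6Aux.cone k j0 c) := by
      have h := Stmt6Aux.homotopy j0 c
      rw [hbc, map_zero, add_zero] at h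
      exact h.symm
    set w := Stmt6Aux.cone k j0 c with hwdef
    have hws : ↑w.support ⊆ {σ : Finset (Fin m) | σ ⊆ J ∧ σ.card ≤ d + 3} := by
      refine Stmt6Aux.cone_supported hcs ?_
      rintro σ ⟨hσJ, hσc⟩ hj0σ
      exact ⟨Finset.insert_subset hj0 hσJ, by rw [Finset.card_insert_of_notMem hj0σ]; omega⟩
    set v := Finsupp.filter (fun σ : Finset (Fin m) => σ.card = d + 3) w with hv
    set r := Finsupp.filter (fun σ : Finset (Fin m) => ¬ σ.card = d + 3) w with hr
    have hwsum : v + r = w := Finsupp.filter_pos_add_filter_neg w _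
    have hvs : v.support ⊆ AMFJ := by
      intro τ hτ
      rw [hv, Finsupp.support_filter, Finset.mem_filter] at hτ
      have h2 := hws (by exact_mod_cast hτ.1)
      show τ ∈ J.powerset.filter (fun L => L.card = d + 3)
      exact Finset.mem_filter.2 ⟨Finset.mem_powerset.2 h2.1, hτ.2⟩
    have hrs : ↑r.support ⊆ {σ : Finset (Fin m) | σ.card ≤ d + 2} := by
      intro τ hτ
      have hτ' : τ ∈ w.support.filter (fun σ => ¬ σ.card = d + 3) := by
        rw [hr, Finsupp.support_filter] at hτ
        exact_mod_cast hτ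
      rw [Finset.mem_filter] at hτ'
      have h2 := hws (by exact_mod_cast hτ'.1)
      have h3 := hτ'.2
      have h4 := h2.2
      show τ.card ≤ d + 2
      omega
    have hbrs : ↑(simplicialBoundary k m r).support ⊆ {σ : Finset (Fin m) | σ.card ≤ d + 1} := by
      refine Stmt6Aux.bdry_supported hrs ?_
      rintro σ hσ j hjσ
      have h1 : σ.card ≤ d + 2 := hσ
      have h2 := Finset.card_erase_of_mem hjσ
      have h3 : 0 < σ.card := Finset.card_pos.2 ⟨j, hjσ⟩
      show (σ.erase j).card ≤ d + 1
      omega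
    refine ⟨fun L => v L, ?_⟩
    intro I hI
    have hI' : I ∈ J.powerset.filter (fun I => I.card = d + 2) := hI
    rw [Finset.mem_filter, Finset.mem_powerset] at hI'
    have hIu : u I = lam I := by
      rw [hu, Finsupp.finset_sum_apply]
      rw [Finset.sum_eq_single I (fun b hb hbne => by
          rw [Finsupp.smul_apply, Finsupp.single_apply, if_neg hbne, smul_zero])
        (fun h => absurd hI h)]
      rw [Finsupp.smul_apply, Finsupp.single_apply, if_pos rfl, smul_eq_mul, mul_one]
    have hIy : y I = 0 := by
      by_contra h
      have h1 := hys (by exact_mod_cast Finsupp.mem_support_iff.2 h)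
      have h2 := h1.2
      have h3 := hI'.2
      omega
    have hIr : (simplicialBoundary k m r) I = 0 := by
      by_contra h
      have h1 : I.card ≤ d + 1 := hbrs (by exact_mod_cast Finsupp.mem_support_iff.2 h)
      have h3 := hI'.2
      omega
    have hcI : c I = lam I := by rw [hc, Finsupp.sub_apply, hIu, hIy, sub_zero]
    have heq : c I = (simplicialBoundary k m v) I + (simplicialBoundary k m r) I := by
      conv_lhs => rw [hcw, ← hwsum]
      rw [map_add, Finsupp.add_apply]
    have hbvI : (simplicialBoundary k m v) I = ∑ L ∈ AMFJ, ∑ i ∈ L,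
        (if L.erase i = I then v L * (-1 : k) ^ ((L.filter (· < i)).card) else 0) := by
      rw [Stmt6Aux.bdry_eq_sum hvs, Finsupp.finset_sum_apply]
      refine Finset.sum_congr rfl fun L _ => ?_
      rw [Finsupp.smul_apply, Stmt6Aux.mfc_eq, Finsupp.finset_sum_apply, Finset.smul_sum]
      refine Finset.sum_congr rfl fun i _ => ?_
      rw [Finsupp.smul_apply, Finsupp.single_apply, smul_eq_mul, smul_eq_mul]
      unfold Stmt6Aux.sgn
      by_cases h : L.erase i = I
      · rw [if_pos h, if_pos h, mul_one]
      · rw [if_neg h, if_neg h, mul_zero, mul_zero]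
    have hfin : lam I = (simplicialBoundary k m v) I := by
      rw [← hcI, heq, hIr, add_zero]
    rw [hfin, hbvI]
end

section
/- Let the 'reflected Backelin–Berglund polynomials' b_L(t) ∈ Z[t] (for simplicial complexes L) be any family satisfying the additivity property b_{K_A ∪ K_B}(t) = b_{K_A}(t) + b_{K_B}(t) − b_{K_{A∩B}}(t) whenever K = K_A ∪ K_B is a union of full subcomplexes. Then for any simplicial complex K on [m], b_K(t) = Σ_{I ∈ K^f} (1 − χ(lk_{K^f} I)) b_{K_I}(t) = Σ_{J ∈ K^f} (−1)^{|J|} Σ_{I ⊆ J} (−1)^{|I|} b_{K_I}(t). -/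
-- reindexing a sum over supersets of I inside S
private lemma sum_superset_pow {m : ℕ} (S I : Finset (Fin m)) (hI : I ⊆ S) :
    ∑ J ∈ S.powerset.filter (fun J => I ⊆ J), (-1:ℤ)^J.card
      = (-1:ℤ)^I.card * (if I = S then 1 else 0) := by
  have : ∑ J ∈ S.powerset.filter (fun J => I ⊆ J), (-1:ℤ)^J.card
      = ∑ A ∈ (S \ I).powerset, (-1:ℤ)^I.card * (-1:ℤ)^A.card := by
    refine Finset.sum_nbij' (fun J => J \ I) (fun A => A ∪ I) ?_ ?_ ?_ ?_ ?_
    · intro J hJ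
      simp only [Finset.mem_filter, Finset.mem_powerset] at hJ ⊢
      exact Finset.sdiff_subset_sdiff hJ.1 le_rfl
    · intro A hA
      simp only [Finset.mem_filter, Finset.mem_powerset] at hA ⊢
      constructor
      · exact Finset.union_subset (hA.trans (Finset.sdiff_subset)) hI
      · exact Finset.subset_union_right
    · intro J hJ
      simp only [Finset.mem_filter, Finset.mem_powerset] at hJ
      exact Finset.sdiff_union_of_subset hJ.2
    · intro A hA
      simp only [Finset.mem_powerset] at hA
      have : Disjoint A I := Finset.disjoint_of_subset_left hA Finset.sdiff_disjoint
      exact Finset.union_sdiff_cancel_right this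
    · intro J hJ
      simp only [Finset.mem_filter, Finset.mem_powerset] at hJ
      rw [← pow_add]
      congr 1
      have := Finset.card_le_card hJ.2
      rw [Finset.card_sdiff_of_subset hJ.2]
      omega
  rw [this, ← Finset.mul_sum, Finset.sum_powerset_neg_one_pow_card]
  have hiff : S \ I = ∅ ↔ I = S := by
    rw [Finset.sdiff_eq_empty_iff_subset]
    exact ⟨fun h => Finset.Subset.antisymm hI h, fun h => h ▸ Finset.Subset.refl S⟩
  simp only [hiff]

-- the telescoping identity on a full powerset
private lemma tele {m : ℕ} (b : Finset (Fin m) → Polynomial ℤ) (S : Finset (Fin m)) :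
    ∑ J ∈ S.powerset, (-1:ℤ)^J.card • ∑ I ∈ J.powerset, (-1:ℤ)^I.card • b I = b S := by
  simp_rw [Finset.smul_sum, smul_smul]
  rw [Finset.sum_comm' (s' := fun I => S.powerset.filter (fun J => I ⊆ J))
      (t' := S.powerset) (by
        intro J I
        simp only [Finset.mem_powerset, Finset.mem_filter]
        constructor
        · rintro ⟨h1, h2⟩; exact ⟨⟨h1, h2⟩, h2.trans h1⟩
        · rintro ⟨⟨h1, h2⟩, _⟩; exact ⟨h1, h2⟩)]
  have key : ∀ I ∈ S.powerset,
      (∑ J ∈ S.powerset.filter (fun J => I ⊆ J), ((-1:ℤ)^J.card * (-1:ℤ)^I.card) • b I)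
      = (if I = S then 1 else 0 : ℤ) • b I := by
    intro I hI
    simp only [Finset.mem_powerset] at hI
    rw [← Finset.sum_smul, ← Finset.sum_mul, sum_superset_pow S I hI]
    congr 1
    rw [mul_comm, ← mul_assoc, ← pow_add]
    have : (-1:ℤ)^(I.card + I.card) = 1 := by
      rw [pow_add, ← mul_pow]; norm_num
    rw [this, one_mul]
  rw [Finset.sum_congr rfl key]
  rw [Finset.sum_eq_single S (fun I _ hne => by simp [hne]) (by simp)]
  simp

theorem stmt11 {m : ℕ}
    (K : Finset (Finset (Fin m)))
    (hdown : ∀ σ ∈ K, ∀ τ ⊆ σ, τ ∈ K)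
    (b : Finset (Fin m) → Polynomial ℤ)
    (hadd : ∀ S T : Finset (Fin m),
      (∀ σ ∈ K, σ ⊆ S ∪ T → σ ⊆ S ∨ σ ⊆ T) →
      b (S ∪ T) = b S + b T - b (S ∩ T)) :
    -- the flagification `K^f` of `K`
    let Kf : Finset (Finset (Fin m)) := (Finset.univ : Finset (Finset (Fin m))).filter
      (fun B => ∀ i ∈ B, ∀ j ∈ B, i ≠ j → ({i, j} : Finset (Fin m)) ∈ K)
    b Finset.univ = ∑ I ∈ Kf, (1 - eulerChar (linkOf Kf I)) • b I ∧
    b Finset.univ = ∑ J ∈ Kf, (-1 : ℤ) ^ J.card •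
      ∑ I ∈ J.powerset, (-1 : ℤ) ^ I.card • b I := by
  intro Kf
  set P : Finset (Fin m) → Prop :=
    fun B => ∀ i ∈ B, ∀ j ∈ B, i ≠ j → ({i, j} : Finset (Fin m)) ∈ K with hP
  set g : Finset (Fin m) → Polynomial ℤ :=
    fun J => (-1:ℤ)^J.card • ∑ I ∈ J.powerset, (-1:ℤ)^I.card • b I with hg
  -- main induction
  have main : ∀ S : Finset (Fin m), b S = ∑ J ∈ S.powerset.filter P, g J := by
    intro S
    induction S using Finset.strongInduction with
    | _ S ih =>
      by_cases hS : ∀ i ∈ S, ∀ j ∈ S, i ≠ j → ({i, j} : Finset (Fin m)) ∈ K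
      · have hfil : S.powerset.filter P = S.powerset := by
          apply Finset.filter_true_of_mem
          intro J hJ
          simp only [Finset.mem_powerset] at hJ
          exact fun i hi j hj hij => hS i (hJ hi) j (hJ hj) hij
        rw [hfil, ← tele b S]
      · push_neg at hS
        obtain ⟨i, hiS, j, hjS, hij, hk⟩ := hS
        set A := S.erase i with hA
        set B := S.erase j with hB
        have hAB : A ∪ B = S := by
          ext x
          simp only [Finset.mem_union, hA, hB, Finset.mem_erase]
          constructor
          · rintro (⟨_, h⟩ | ⟨_, h⟩) <;> exact h
          · intro hx
            rcases eq_or_ne x i with rfl | hxi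
            · exact Or.inr ⟨hij, hx⟩
            · exact Or.inl ⟨hxi, hx⟩
        have hcond : ∀ σ ∈ K, σ ⊆ A ∪ B → σ ⊆ A ∨ σ ⊆ B := by
          intro σ hσ hsub
          rw [hAB] at hsub
          by_cases hiσ : i ∈ σ
          · by_cases hjσ : j ∈ σ
            · exfalso
              apply hk
              apply hdown σ hσ
              intro x hx
              simp only [Finset.mem_insert, Finset.mem_singleton] at hx
              rcases hx with rfl | rfl
              · exact hiσ
              · exact hjσ
            · right; rw [hB, Finset.subset_erase]; exact ⟨hsub, hjσ⟩
          · left; rw [hA, Finset.subset_erase]; exact ⟨hsub, hiσ⟩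
        have hb : b S = b A + b B - b (A ∩ B) := by
          have := hadd A B hcond
          rwa [hAB] at this
        have hAS : A ⊂ S := Finset.erase_ssubset hiS
        have hBS : B ⊂ S := Finset.erase_ssubset hjS
        have hABS : A ∩ B ⊂ S := lt_of_le_of_lt Finset.inter_subset_left hAS
        rw [hb, ih A hAS, ih B hBS, ih (A ∩ B) hABS]
        -- the sets
        have hU : S.powerset.filter P = (A.powerset.filter P) ∪ (B.powerset.filter P) := by
          ext J
          simp only [Finset.mem_union, Finset.mem_filter, Finset.mem_powerset]
          constructor
          · rintro ⟨hJS, hpJ⟩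
            by_cases hiJ : i ∈ J
            · by_cases hjJ : j ∈ J
              · exact absurd (hpJ i hiJ j hjJ hij) hk
              · exact Or.inr ⟨Finset.subset_erase.mpr ⟨hJS, hjJ⟩, hpJ⟩
            · exact Or.inl ⟨Finset.subset_erase.mpr ⟨hJS, hiJ⟩, hpJ⟩
          · rintro (⟨h1, h2⟩ | ⟨h1, h2⟩)
            · exact ⟨h1.trans hAS.subset, h2⟩
            · exact ⟨h1.trans hBS.subset, h2⟩
        have hI : (A.powerset.filter P) ∩ (B.powerset.filter P) = (A ∩ B).powerset.filter P := by
          ext J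
          simp only [Finset.mem_inter, Finset.mem_filter, Finset.mem_powerset,
            Finset.subset_inter_iff]
          tauto
        have := Finset.sum_union_inter (s₁ := A.powerset.filter P) (s₂ := B.powerset.filter P)
          (f := g)
        rw [hI] at this
        rw [hU]
        linear_combination -this
  constructor
  · -- first identity: rearrange the J-sum into coefficients of b I
    have h2 : b Finset.univ = ∑ J ∈ Kf, g J := by
      have := main Finset.univ
      rwa [Finset.powerset_univ] at this
    rw [h2]
    have expand : ∀ J, g J = ∑ I ∈ J.powerset, ((-1:ℤ)^J.card * (-1:ℤ)^I.card) • b I := by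
      intro J
      rw [hg]
      simp_rw [Finset.smul_sum, smul_smul]
    rw [Finset.sum_congr rfl (fun J _ => expand J)]
    rw [Finset.sum_comm' (s' := fun I => Kf.filter (fun J => I ⊆ J)) (t' := Kf) (by
      intro J I
      constructor
      · rintro ⟨h1, h2⟩
        rw [Finset.mem_powerset] at h2
        refine ⟨Finset.mem_filter.mpr ⟨h1, h2⟩, ?_⟩
        simp only [Kf, Finset.mem_filter, Finset.mem_univ, true_and] at h1 ⊢
        exact fun x hx y hy hxy => h1 x (h2 hx) y (h2 hy) hxy
      · rintro ⟨h1, _⟩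
        rw [Finset.mem_filter] at h1
        exact ⟨h1.1, Finset.mem_powerset.mpr h1.2⟩)]
    refine Finset.sum_congr rfl ?_
    intro I hI
    have hIKf : ∀ x ∈ I, ∀ y ∈ I, x ≠ y → ({x, y} : Finset (Fin m)) ∈ K := by
      simp only [Kf, Finset.mem_filter] at hI
      exact hI.2
    -- reindex over the link
    have hre : ∑ J ∈ Kf.filter (fun J => I ⊆ J), ((-1:ℤ)^J.card * (-1:ℤ)^I.card) • b I
        = ∑ A ∈ linkOf Kf I, (-1:ℤ)^A.card • b I := by
      refine Finset.sum_nbij' (fun J => J \ I) (fun A => A ∪ I) ?_ ?_ ?_ ?_ ?_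
      · intro J hJ
        simp only [Finset.mem_filter] at hJ
        simp only [linkOf, Finset.mem_filter, Finset.mem_univ, true_and]
        refine ⟨by simp, by rw [Finset.sdiff_union_of_subset hJ.2]; exact hJ.1⟩
      · intro A hA
        simp only [linkOf, Finset.mem_filter, Finset.mem_univ, true_and] at hA
        simp only [Finset.mem_filter]
        exact ⟨hA.2, Finset.subset_union_right⟩
      · intro J hJ
        simp only [Finset.mem_filter] at hJ
        exact Finset.sdiff_union_of_subset hJ.2
      · intro A hA
        simp only [linkOf, Finset.mem_filter, Finset.mem_univ, true_and] at hA
        have : Disjoint A I := Finset.disjoint_iff_inter_eq_empty.mpr hA.1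
        exact Finset.union_sdiff_cancel_right this
      · intro J hJ
        simp only [Finset.mem_filter] at hJ
        congr 1
        rw [← pow_add]
        have hle := Finset.card_le_card hJ.2
        have : J.card = (J \ I).card + I.card := by
          rw [Finset.card_sdiff_of_subset hJ.2]; omega
        rw [this]
        rw [pow_add, pow_add, mul_assoc, ← pow_add]
        have h2 : (-1:ℤ)^(I.card + I.card) = 1 := by
          rw [pow_add, ← mul_pow]; norm_num
        rw [h2, mul_one]
    rw [hre, ← Finset.sum_smul]
    congr 1
    -- ∑_{A ∈ link} (-1)^|A| = 1 - χ(link)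
    have hempty : (∅ : Finset (Fin m)) ∈ linkOf Kf I := by
      simp only [linkOf, Finset.mem_filter, Finset.mem_univ, true_and]
      constructor
      · simp
      · simpa using hI
    rw [← Finset.sum_filter_add_sum_filter_not (linkOf Kf I) (fun A => A.Nonempty)]
    have hnon : (linkOf Kf I).filter (fun A => ¬A.Nonempty) = {∅} := by
      ext A
      simp only [Finset.mem_filter, Finset.not_nonempty_iff_eq_empty, Finset.mem_singleton]
      constructor
      · rintro ⟨_, rfl⟩; rfl
      · rintro rfl; exact ⟨hempty, rfl⟩
    rw [hnon]
    simp only [Finset.sum_singleton, Finset.card_empty, pow_zero]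
    rw [eulerChar]
    have : ∑ A ∈ (linkOf Kf I).filter (fun A => A.Nonempty), (-1:ℤ)^A.card
        = - ∑ A ∈ (linkOf Kf I).filter (fun A => A.Nonempty), (-1:ℤ)^(A.card + 1) := by
      rw [← Finset.sum_neg_distrib]
      refine Finset.sum_congr rfl fun A _ => ?_
      rw [pow_succ]; ring
    rw [this]; ring
  · have := main Finset.univ
    rwa [Finset.powerset_univ] at this
end

section
/- Let L be a flag simplicial complex on [m] and K = sk_d L its d-skeleton (d ≥ 1). Suppose b is a function from simplicial complexes (full subcomplexes of L and their skeleta) to Z[t] such that: (i) b satisfies additivity b_{K_A ∪ K_B} = b_{K_A} + b_{K_B} − b_{K_{A∩B}} for unions of full subcomplexes, and (ii) on skeleta of simplices, b_{sk_d Δ_I}(t) = 1 − P(H_*(sk_d Δ_I; k); t) for a field k. Then b_K(t) = 1 − χ(L) + (−t)^d (χ(L) − χ(K)). -/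
theorem stmt12 {m : ℕ} (d : ℕ) (hd : 1 ≤ d)
    (L : Finset (Finset (Fin m)))
    (hdown : ∀ σ ∈ L, ∀ τ ⊆ σ, τ ∈ L)
    (hvert : ∀ i : Fin m, ({i} : Finset (Fin m)) ∈ L)
    -- `L` is flag
    (hflag : ∀ I : Finset (Fin m),
      (∀ i ∈ I, ∀ j ∈ I, i ≠ j → ({i, j} : Finset (Fin m)) ∈ L) → I ∈ L)
    (b : Finset (Fin m) → Polynomial ℤ)
    -- the `d`-skeleton `K = sk_d L`
    (K : Finset (Finset (Fin m))) (hK : K = L.filter (fun σ => σ.card ≤ d + 1))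
    -- (i) additivity on unions of full subcomplexes of `K`
    (hadd : ∀ S T : Finset (Fin m),
      (∀ σ ∈ K, σ ⊆ S ∪ T → σ ⊆ S ∨ σ ⊆ T) →
      b (S ∪ T) = b S + b T - b (S ∩ T))
    -- value on the empty complex
    (hempty : b ∅ = 1)
    -- (ii) value on skeleta of simplices: for a nonempty face `I` of `L`, `K_I = sk_d Δ_I` and
    -- `b I = 1 − P(H_*(sk_d Δ_I; k); t) = (−t)^d (1 − χ(sk_d Δ_I))`
    (hsimplex : ∀ I ∈ L, I.Nonempty →
      b I = (-(Polynomial.X : Polynomial ℤ)) ^ d *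
        ((1 - eulerChar (I.powerset.filter (fun A => A.card ≤ d + 1)) : ℤ) :
          Polynomial ℤ)) :
    b Finset.univ =
      ((1 - eulerChar L : ℤ) : Polynomial ℤ) +
        (-(Polynomial.X : Polynomial ℤ)) ^ d *
          ((eulerChar L - eulerChar K : ℤ) : Polynomial ℤ) := by
  classical
  -- Euler characteristic is additive on unions
  have euler_add : ∀ P Q : Finset (Finset (Fin m)),
      eulerChar (P ∪ Q) + eulerChar (P ∩ Q) = eulerChar P + eulerChar Q := by
    intro P Q
    unfold eulerChar
    rw [Finset.filter_union, Finset.filter_inter_distrib]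
    exact Finset.sum_union_inter
  have hKL : ∀ σ ∈ K, σ ∈ L := by
    intro σ hσ; rw [hK] at hσ; exact (Finset.mem_filter.mp hσ).1
  have hzero : ∀ F : Finset (Finset (Fin m)),
      eulerChar (F.filter (· ⊆ (∅ : Finset (Fin m)))) = 0 := by
    intro F
    unfold eulerChar
    rw [Finset.sum_eq_zero]
    intro A hA
    simp only [Finset.mem_filter] at hA
    exact absurd (Finset.subset_empty.mp hA.1.2) (Finset.nonempty_iff_ne_empty.mp hA.2)
  have key : ∀ n : ℕ, ∀ S : Finset (Fin m), S.card ≤ n →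
      b S = ((1 - eulerChar (L.filter (· ⊆ S)) : ℤ) : Polynomial ℤ)
        + (-(Polynomial.X : Polynomial ℤ)) ^ d *
          ((eulerChar (L.filter (· ⊆ S)) - eulerChar (K.filter (· ⊆ S)) : ℤ) :
            Polynomial ℤ) := by
    intro n
    induction n with
    | zero =>
      intro S hS
      have hS0 : S = ∅ := Finset.card_eq_zero.mp (Nat.le_zero.mp hS)
      subst hS0
      rw [hempty, hzero L, hzero K]
      push_cast
      ring
    | succ n ih =>
      intro S hS
      rcases eq_or_ne S ∅ with hS0 | hSne
      · subst hS0
        rw [hempty, hzero L, hzero K]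
        push_cast
        ring
      have hSne' : S.Nonempty := Finset.nonempty_iff_ne_empty.mpr hSne
      by_cases hSL : S ∈ L
      · -- S is a face of L: use hsimplex
        have hLS : L.filter (· ⊆ S) = S.powerset := by
          ext σ
          simp only [Finset.mem_filter, Finset.mem_powerset]
          exact ⟨fun h => h.2, fun h => ⟨hdown S hSL σ h, h⟩⟩
        have hKS : K.filter (· ⊆ S) = S.powerset.filter (fun A => A.card ≤ d + 1) := by
          ext σ
          simp only [hK, Finset.mem_filter, Finset.mem_powerset]
          exact ⟨fun h => ⟨h.2, h.1.2⟩, fun h => ⟨⟨hdown S hSL σ h.1, h.2⟩, h.1⟩⟩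
        have hchi : eulerChar S.powerset = 1 := by
          unfold eulerChar
          have h1 : ∑ A ∈ S.powerset, (-1 : ℤ) ^ (A.card + 1) = 0 := by
            have := Finset.sum_powerset_neg_one_pow_card_of_nonempty (x := S) hSne'
            calc ∑ A ∈ S.powerset, (-1 : ℤ) ^ (A.card + 1)
                = ∑ A ∈ S.powerset, (-1) * (-1 : ℤ) ^ A.card := by
                  apply Finset.sum_congr rfl; intro A _; ring
              _ = 0 := by rw [← Finset.mul_sum, this, mul_zero]
          have h2 : S.powerset.filter (fun A => A.Nonempty)
              = S.powerset.erase ∅ := by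
            ext A
            simp [Finset.mem_filter, Finset.mem_erase, Finset.nonempty_iff_ne_empty,
              and_comm]
          rw [h2, Finset.sum_erase_eq_sub (Finset.empty_mem_powerset S), h1]
          norm_num
        rw [hsimplex S hSL hSne', hLS, hKS, hchi]
        push_cast
        ring
      · -- S is not a face: flagness gives a missing edge
        have hex : ∃ i ∈ S, ∃ j ∈ S, i ≠ j ∧ ({i, j} : Finset (Fin m)) ∉ L := by
          by_contra hc
          push_neg at hc
          exact hSL (hflag S (fun i hi j hj hij => hc i hi j hj hij))
        obtain ⟨i, hi, j, hj, hij, hedge⟩ := hex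
        set A := S.erase i with hA
        set B := S.erase j with hB
        have hunion : A ∪ B = S := by
          ext x
          simp only [hA, hB, Finset.mem_union, Finset.mem_erase]
          constructor
          · rintro (⟨_, h⟩ | ⟨_, h⟩) <;> exact h
          · intro hx
            by_cases hxi : x = i
            · right; exact ⟨by simp [hxi, hij], hx⟩
            · left; exact ⟨hxi, hx⟩
        have hsplit : ∀ σ ∈ L, σ ⊆ S → σ ⊆ A ∨ σ ⊆ B := by
          intro σ hσL hσS
          by_cases hiσ : i ∈ σ
          · right
            intro x hx
            rw [hB, Finset.mem_erase]
            refine ⟨fun hxj => ?_, hσS hx⟩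
            subst hxj
            exact hedge (hdown σ hσL {i, x} (by
              intro y hy
              rcases Finset.mem_insert.mp hy with h | h
              · subst h; exact hiσ
              · rw [Finset.mem_singleton.mp h]; exact hx))
          · left
            intro x hx
            rw [hA, Finset.mem_erase]
            exact ⟨fun hxi => hiσ (hxi ▸ hx), hσS hx⟩
        -- filter decompositions
        have hfilt : ∀ F : Finset (Finset (Fin m)), (∀ σ ∈ F, σ ∈ L) →
            F.filter (· ⊆ S) = F.filter (· ⊆ A) ∪ F.filter (· ⊆ B) ∧
            F.filter (· ⊆ A) ∩ F.filter (· ⊆ B) = F.filter (· ⊆ A ∩ B) := by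
          intro F hF
          constructor
          · ext σ
            simp only [Finset.mem_union, Finset.mem_filter]
            constructor
            · intro h
              rcases hsplit σ (hF σ h.1) h.2 with h' | h'
              · exact Or.inl ⟨h.1, h'⟩
              · exact Or.inr ⟨h.1, h'⟩
            · rintro (⟨h1, h2⟩ | ⟨h1, h2⟩)
              · exact ⟨h1, h2.trans (Finset.erase_subset _ _)⟩
              · exact ⟨h1, h2.trans (Finset.erase_subset _ _)⟩
          · ext σ
            simp only [Finset.mem_inter, Finset.mem_filter, Finset.subset_inter_iff]
            tauto
        obtain ⟨hLu, hLi⟩ := hfilt L (fun σ h => h)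
        obtain ⟨hKu, hKi⟩ := hfilt K hKL
        have eL : eulerChar (L.filter (· ⊆ S)) + eulerChar (L.filter (· ⊆ A ∩ B))
            = eulerChar (L.filter (· ⊆ A)) + eulerChar (L.filter (· ⊆ B)) := by
          rw [hLu, ← hLi]; exact euler_add _ _
        have eK : eulerChar (K.filter (· ⊆ S)) + eulerChar (K.filter (· ⊆ A ∩ B))
            = eulerChar (K.filter (· ⊆ A)) + eulerChar (K.filter (· ⊆ B)) := by
          rw [hKu, ← hKi]; exact euler_add _ _
        -- cardinalities
        have hcA : A.card ≤ n := by
          rw [hA, Finset.card_erase_of_mem hi]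
          omega
        have hcB : B.card ≤ n := by
          rw [hB, Finset.card_erase_of_mem hj]
          omega
        have hcAB : (A ∩ B).card ≤ n :=
          le_trans (Finset.card_le_card Finset.inter_subset_left) hcA
        -- additivity
        have hbS : b S = b A + b B - b (A ∩ B) := by
          rw [← hunion]
          apply hadd
          intro σ hσ hσS
          exact hsplit σ (hKL σ hσ) (hunion ▸ hσS)
        rw [hbS, ih A hcA, ih B hcB, ih (A ∩ B) hcAB]
        have eL' : eulerChar (L.filter (· ⊆ S)) = eulerChar (L.filter (· ⊆ A))
            + eulerChar (L.filter (· ⊆ B)) - eulerChar (L.filter (· ⊆ A ∩ B)) := by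
          omega
        have eK' : eulerChar (K.filter (· ⊆ S)) = eulerChar (K.filter (· ⊆ A))
            + eulerChar (K.filter (· ⊆ B)) - eulerChar (K.filter (· ⊆ A ∩ B)) := by
          omega
        rw [eL', eK']
        push_cast
        ring
  have huniv : ∀ F : Finset (Finset (Fin m)), F.filter (· ⊆ (Finset.univ : Finset (Fin m))) = F := by
    intro F
    apply Finset.filter_true_of_mem
    intro σ _
    exact Finset.subset_univ σ
  have := key (Finset.univ : Finset (Fin m)).card Finset.univ le_rfl
  rwa [huniv L, huniv K] at this
end

section
/- Let K be a connected simplicial complex whose 1-skeleton is a chordal graph. Then the simplicial complex K ∪ MF_{≥3}(K), obtained from K by filling in all missing faces of size ≥ 3, is simply connected. -/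
/-- The geometric realization of a simplicial complex `K` on `[m]`, as a subspace of `ℝ^m`:
convex combinations of vertices supported on a face of `K`. -/
def realization {m : ℕ} (K : Finset (Finset (Fin m))) : Set (Fin m → ℝ) :=
  {f | (∀ i, 0 ≤ f i) ∧ (∑ i, f i = 1) ∧ ∃ σ ∈ K, ∀ i, f i ≠ 0 → i ∈ σ}

/-- `I` is a missing face of `K`. -/
def IsMissingFace {m : ℕ} (K : Finset (Finset (Fin m))) (I : Finset (Fin m)) : Prop :=
  I ∉ K ∧ ∀ J ⊂ I, J ∈ K

instance {m : ℕ} (K : Finset (Finset (Fin m))) : DecidablePred (IsMissingFace K) :=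
  fun I => inferInstanceAs (Decidable (I ∉ K ∧ ∀ J ⊂ I, J ∈ K))

/-- The complex obtained from `K` by filling in all missing faces of size at least 3. -/
def fillMF3 {m : ℕ} (K : Finset (Finset (Fin m))) : Finset (Finset (Fin m)) :=
  K ∪ (Finset.univ : Finset (Finset (Fin m))).filter
    (fun I => 3 ≤ I.card ∧ IsMissingFace K I)

/-!
Every path in the realization is cut, by a Lebesgue-number argument, into pieces lying in open
stars of vertices. An open star is star-convex about its vertex, so each piece is homotopic to
two straight "spokes" through that vertex, and consecutive spokes at a common point are joined
inside a common face by an edge. Hence every loop is conjugate to an edge loop of the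
1-skeleton. A closed walk in a chordal graph is reduced, by cutting along repeated vertices and
along chords, to triangles; in `K ∪ MF_{≥3}(K)` every triangle of the 1-skeleton spans a face,
so each of them is null-homotopic.
-/

open CategoryTheory Set
open scoped Convex

section PathClasses

variable {X : Type*} [TopologicalSpace X]

def pathHom {x y : X} (p : Path x y) : FundamentalGroupoid.mk x ⟶ FundamentalGroupoid.mk y :=
  Path.Homotopic.Quotient.mk p

lemma pathHom_trans {x y z : X} (p : Path x y) (q : Path y z) :
    pathHom (p.trans q) = pathHom p ≫ pathHom q := rfl

lemma pathHom_symm {x y : X} (p : Path x y) : pathHom p.symm = inv (pathHom p) :=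
  IsIso.eq_inv_of_hom_inv_id (Quotient.sound ⟨(Path.Homotopy.reflTransSymm p).symm⟩)

lemma pathHom_eq_pathHom_iff {x y : X} {p q : Path x y} :
    pathHom p = pathHom q ↔ p.Homotopic q :=
  Path.Homotopic.Quotient.eq

def Path.codRestrict {s : Set X} {x y : s} (γ : Path (x : X) y) (h : ∀ t, γ t ∈ s) :
    Path x y where
  toFun t := ⟨γ t, h t⟩
  source' := Subtype.ext γ.source
  target' := Subtype.ext γ.target

theorem Path.Homotopic.of_range_subset {s : Set X} (hs : IsSimplyConnected s) {x y : X}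
    {p q : Path x y} (hp : range p ⊆ s) (hq : range q ⊆ s) : p.Homotopic q := by
  have := hs.simplyConnectedSpace
  lift x to s using hp ⟨0, p.source⟩
  lift y to s using hp ⟨1, p.target⟩
  exact (SimplyConnectedSpace.paths_homotopic (p.codRestrict fun t => hp ⟨t, rfl⟩)
    (q.codRestrict fun t => hq ⟨t, rfl⟩)).map ⟨_, continuous_subtype_val⟩

theorem IsSimplyConnected.preimage_val {B A : Set X} (hAB : A ⊆ B) (hA : IsSimplyConnected A) :
    IsSimplyConnected ((↑) ⁻¹' A : Set B) := by
  rwa [← Topology.IsEmbedding.subtypeVal.isSimplyConnected_image, Subtype.image_preimage_coe,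
    inter_eq_right.2 hAB]

end PathClasses

section Segments

variable {E : Type*} [AddCommGroup E] [Module ℝ E] [TopologicalSpace E] [ContinuousAdd E]
  [ContinuousSMul ℝ E] {B : Set E}

def segmentPath (x y : B) (h : [(x : E) -[ℝ] y] ⊆ B) : Path x y :=
  (Path.segment (x : E) y).codRestrict fun t => h (Path.range_segment (x : E) y ▸ mem_range_self t)

lemma range_segmentPath_subset (x y : B) (h : [(x : E) -[ℝ] y] ⊆ B) :
    range (segmentPath x y h) ⊆ (↑) ⁻¹' [(x : E) -[ℝ] y] := by
  rintro _ ⟨t, rfl⟩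
  exact Path.range_segment (x : E) y ▸ mem_range_self t

theorem pathHom_eq_of_range_subset {A : Set E} {c : E} (hAB : A ⊆ B) (hA : StarConvex ℝ c A)
    (hc : c ∈ A) {x y : B} {p q : Path x y} (hp : range p ⊆ (↑) ⁻¹' A)
    (hq : range q ⊆ (↑) ⁻¹' A) : pathHom p = pathHom q := by
  have : ContractibleSpace A := hA.contractibleSpace ⟨c, hc⟩
  have hA' : IsSimplyConnected A := inferInstanceAs (SimplyConnectedSpace A)
  exact pathHom_eq_pathHom_iff.2 (.of_range_subset (hA'.preimage_val hAB) hp hq)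

end Segments

section ClosedWalks

variable {V : Type*} (R : V → V → Prop)

def IsWalk (v : V) (l : List V) (w : V) : Prop :=
  (v :: (l ++ [w])).IsChain R

def IsChordal : Prop :=
  ∀ n : ℕ, 4 ≤ n → ∀ f : ZMod n → V, Function.Injective f → (∀ i, R (f i) (f (i + 1))) →
    ∃ i j : ZMod n, j ≠ i ∧ j ≠ i + 1 ∧ i ≠ j + 1 ∧ R (f i) (f j)

variable {R}

lemma isWalk_nil {v w : V} : IsWalk R v [] w ↔ R v w := by
  simp [IsWalk]

lemma isWalk_append_cons {v x w : V} {l₁ l₂ : List V} :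
    IsWalk R v (l₁ ++ x :: l₂) w ↔ IsWalk R v l₁ x ∧ IsWalk R x l₂ w := by
  simp only [IsWalk, List.append_assoc, List.cons_append]
  exact List.isChain_cons_split

lemma isWalk_cons {v a w : V} {l : List V} : IsWalk R v (a :: l) w ↔ R v a ∧ IsWalk R a l w := by
  rw [← List.nil_append (a :: l), isWalk_append_cons, isWalk_nil]

lemma isWalk_rotate {v x : V} {l l₁ r : List V} (h : v :: l = l₁ ++ x :: r) :
    IsWalk R v l v ↔ IsWalk R x (r ++ l₁) x := by
  rcases l₁ with _ | ⟨v', l₁⟩ <;>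
    simp only [List.nil_append, List.cons_append, List.cons.injEq] at h
  · rw [h.1, h.2, List.append_nil]
  · rw [← h.1, h.2, isWalk_append_cons, isWalk_append_cons, and_comm]

lemma IsWalk.rel_getElem_succ {v : V} {l : List V} (hw : IsWalk R v l v) (i : Fin (l.length + 1)) :
    R ((v :: l).get i) ((v :: l).get (i + 1)) := by
  rw [IsWalk, ← List.cons_append] at hw
  induction i using Fin.lastCases with
  | last =>
    have := hw.getElem l.length (by simp)
    rw [List.getElem_append_left (by simp), List.getElem_append_right (by simp)] at this
    simpa using this
  | cast k =>
    have := hw.getElem k (by simp)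
    rw [Fin.coeSucc_eq_succ]
    rwa [List.getElem_append_left (by simp), List.getElem_append_left (by simp)] at this

lemma List.exists_eq_append_cons_append_cons_of_not_nodup {α : Type*} :
    ∀ {l : List α}, ¬ l.Nodup → ∃ l₁ x l₂ l₃, l = l₁ ++ x :: (l₂ ++ x :: l₃)
  | [], h => absurd List.nodup_nil h
  | a :: t, h => by
    by_cases ha : a ∈ t
    · obtain ⟨t₁, t₂, rfl⟩ := List.append_of_mem ha
      exact ⟨[], a, t₁, t₂, rfl⟩
    · obtain ⟨l₁, x, l₂, l₃, rfl⟩ :=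
        exists_eq_append_cons_append_cons_of_not_nodup fun hn => h (List.nodup_cons.2 ⟨ha, hn⟩)
      exact ⟨a :: l₁, x, l₂, l₃, rfl⟩

lemma List.eq_take_append_getElem_cons_append_getElem_cons {α : Type*} {l : List α} {i j : ℕ}
    (hij : i < j) (hj : j < l.length) :
    l = l.take i ++ l[i] :: ((l.drop (i + 1)).take (j - (i + 1)) ++ l[j] :: l.drop (j + 1)) := by
  conv_lhs => rw [← List.take_append_drop i l, List.drop_eq_getElem_cons (by omega),
    ← List.take_append_drop (j - (i + 1)) (l.drop (i + 1)), List.drop_drop,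
    show i + 1 + (j - (i + 1)) = j by omega, List.drop_eq_getElem_cons hj]

theorem IsChordal.exists_chord (hchordal : IsChordal R) (hsymm : ∀ a b, R a b → R b a) {v : V}
    {l : List V} (hw : IsWalk R v l v) (hnd : (v :: l).Nodup) (hlen : 3 ≤ l.length) :
    ∃ l₁ a l₂ b l₃, v :: l = l₁ ++ a :: (l₂ ++ b :: l₃) ∧ l₂ ≠ [] ∧ l₁ ++ l₃ ≠ [] ∧ R a b := by
  have hchord : ∃ i j : Fin (l.length + 1), j ≠ i ∧ j ≠ i + 1 ∧ i ≠ j + 1 ∧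
      R ((v :: l).get i) ((v :: l).get j) :=
    hchordal (l.length + 1) (by omega) (v :: l).get (List.nodup_iff_injective_get.1 hnd)
      hw.rel_getElem_succ
  obtain ⟨i, j, hji, hji1, hij1, hij⟩ := hchord
  wlog hlt : i < j generalizing i j
  · exact this j i (Ne.symm hji) hij1 hji1 (hsymm _ _ hij) (lt_of_le_of_ne (not_lt.1 hlt) hji)
  have hi : i ≠ Fin.last _ := Fin.ne_last_of_lt hlt
  refine ⟨_, _, _, _, _,
    List.eq_take_append_getElem_cons_append_getElem_cons (l := v :: l) hlt j.2, ?_, ?_, hij⟩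
  · have : j.val ≠ i.val + 1 := fun h =>
      hji1 (Fin.ext (by rw [Fin.val_add_one, if_neg hi, h]))
    rw [← List.length_pos_iff]
    simp only [List.length_take, List.length_drop, List.length_cons]
    omega
  · intro h
    simp only [List.append_eq_nil_iff, List.take_eq_nil_iff, List.drop_eq_nil_iff,
      List.length_cons, reduceCtorEq, or_false] at h
    have hj : j = Fin.last _ := Fin.ext (by simp; omega)
    exact hij1 (by rw [hj, Fin.last_add_one]; exact Fin.ext h.1)

section Category

variable {C : Type*} [Category C] {F : V → C} (e : ∀ v w, F v ⟶ F w)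

def walkHom : (v : V) → List V → (w : V) → (F v ⟶ F w)
  | v, [], w => e v w
  | v, a :: l, w => e v a ≫ walkHom a l w

@[simp]
lemma walkHom_nil (v w : V) : walkHom e v [] w = e v w := rfl

@[simp]
lemma walkHom_cons (v a w : V) (l : List V) : walkHom e v (a :: l) w = e v a ≫ walkHom e a l w :=
  rfl

lemma walkHom_append_cons (v x w : V) (l₁ l₂ : List V) :
    walkHom e v (l₁ ++ x :: l₂) w = walkHom e v l₁ x ≫ walkHom e x l₂ w := by
  induction l₁ generalizing v with
  | nil => rfl
  | cons a l₁ ih => simp [ih]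

end Category

lemma Groupoid.comp_eq_id_comm {C : Type*} [Groupoid C] {X Y : C} {f : X ⟶ Y} {g : Y ⟶ X} :
    f ≫ g = 𝟙 X ↔ g ≫ f = 𝟙 Y := by
  rw [comp_hom_eq_id, hom_comp_eq_id]

variable {C : Type*} [Groupoid C] {F : V → C} {e : ∀ v w, F v ⟶ F w}

lemma walkHom_rotate {v x : V} {l l₁ r : List V} (h : v :: l = l₁ ++ x :: r) :
    walkHom e v l v = 𝟙 _ ↔ walkHom e x (r ++ l₁) x = 𝟙 _ := by
  rcases l₁ with _ | ⟨v', l₁⟩ <;>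
    simp only [List.nil_append, List.cons_append, List.cons.injEq] at h
  · obtain ⟨rfl, rfl⟩ := h
    rw [List.append_nil]
  · obtain ⟨rfl, rfl⟩ := h
    rw [walkHom_append_cons, walkHom_append_cons, Groupoid.comp_eq_id_comm]

variable (hrefl : ∀ a, R a a) (hsymm : ∀ a b, R a b → R b a)
  (htri : ∀ u v w, R u v → R v w → R u w → e u v ≫ e v w = e u w)
include hrefl htri

lemma eq_id_of_triangle (a : V) : e a a = 𝟙 _ :=
  (cancel_epi (e a a)).1 (by rw [htri a a a (hrefl a) (hrefl a) (hrefl a), Category.comp_id])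

include hsymm

lemma comp_eq_id_of_triangle {a b : V} (hab : R a b) : e a b ≫ e b a = 𝟙 _ := by
  rw [htri a b a hab (hsymm a b hab) (hrefl a), eq_id_of_triangle hrefl htri]

lemma walkHom_eq_comp_of_chord {a b : V} (hab : R a b) (l r : List V) :
    walkHom e a (l ++ b :: r) a = walkHom e a (l ++ [b]) a ≫ walkHom e a (b :: r) a := by
  rw [walkHom_append_cons, walkHom_append_cons, walkHom_nil, walkHom_cons, Category.assoc,
    ← Category.assoc (e b a), comp_eq_id_of_triangle hrefl hsymm htri (hsymm a b hab),
    Category.id_comp]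

lemma walkHom_eq_id_of_length_le_two {v : V} {l : List V} (hw : IsWalk R v l v)
    (hlen : l.length ≤ 2) : walkHom e v l v = 𝟙 _ := by
  rcases l with _ | ⟨a, _ | ⟨b, _ | ⟨c, l⟩⟩⟩
  · exact eq_id_of_triangle hrefl htri v
  · exact comp_eq_id_of_triangle hrefl hsymm htri (isWalk_cons.1 hw).1
  · simp only [isWalk_cons, isWalk_nil] at hw
    rw [walkHom_cons, walkHom_cons, walkHom_nil, ← Category.assoc,
      htri v a b hw.1 hw.2.1 (hsymm _ _ hw.2.2),
      comp_eq_id_of_triangle hrefl hsymm htri (hsymm _ _ hw.2.2)]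
  · simp at hlen

theorem walkHom_eq_id_of_isChordal (hchordal : IsChordal R) {v : V} {l : List V}
    (hw : IsWalk R v l v) : walkHom e v l v = 𝟙 _ := by
  induction hn : l.length using Nat.strong_induction_on generalizing v l with
  | _ n ih =>
  by_cases hnd : (v :: l).Nodup
  · by_cases hlen : 3 ≤ l.length
    · obtain ⟨l₁, a, l₂, b, l₃, hsplit, hl₂, hl₁₃, hab⟩ :=
        hchordal.exists_chord hsymm hw hnd hlen
      have hlen' := congrArg List.length hsplit
      have hl₁₃' := List.length_pos_iff.2 hl₁₃
      have hl₂' := List.length_pos_iff.2 hl₂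
      simp only [List.length_cons, List.length_append] at hlen' hl₁₃'
      rw [walkHom_rotate hsplit, List.append_assoc, List.cons_append,
        walkHom_eq_comp_of_chord hrefl hsymm htri hab]
      rw [isWalk_rotate hsplit, List.append_assoc, List.cons_append, isWalk_append_cons] at hw
      rw [ih _ (by simp; omega) (isWalk_append_cons.2 ⟨hw.1, isWalk_nil.2 (hsymm a b hab)⟩) rfl,
        ih _ (by simp; omega) (isWalk_cons.2 ⟨hab, hw.2⟩) rfl, Category.comp_id]
    · exact walkHom_eq_id_of_length_le_two hrefl hsymm htri hw (by omega)
  · obtain ⟨l₁, x, l₂, l₃, hsplit⟩ := List.exists_eq_append_cons_append_cons_of_not_nodup hnd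
    have hlen' := congrArg List.length hsplit
    simp only [List.length_cons, List.length_append] at hlen'
    rw [walkHom_rotate hsplit, List.append_assoc, List.cons_append, walkHom_append_cons]
    rw [isWalk_rotate hsplit, List.append_assoc, List.cons_append, isWalk_append_cons] at hw
    rw [ih _ (by omega) hw.1 rfl, ih _ (by simp; omega) hw.2 rfl, Category.comp_id]

end ClosedWalks

section Realization

variable {m : ℕ}

def closedSimplex (σ : Finset (Fin m)) : Set (Fin m → ℝ) :=
  {f | (∀ i, 0 ≤ f i) ∧ ∑ i, f i = 1 ∧ ∀ i, f i ≠ 0 → i ∈ σ}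

lemma convex_closedSimplex (σ : Finset (Fin m)) : Convex ℝ (closedSimplex σ) := by
  intro x hx y hy a b ha hb hab
  refine ⟨fun i => ?_, ?_, fun i hi => ?_⟩
  · simpa using add_nonneg (mul_nonneg ha (hx.1 i)) (mul_nonneg hb (hy.1 i))
  · simp [Finset.sum_add_distrib, ← Finset.mul_sum, hx.2.1, hy.2.1, hab]
  · by_contra hiσ
    have hxi : x i = 0 := by_contra fun h => hiσ (hx.2.2 i h)
    have hyi : y i = 0 := by_contra fun h => hiσ (hy.2.2 i h)
    simp [hxi, hyi] at hi

lemma single_mem_closedSimplex {σ : Finset (Fin m)} {v : Fin m} (hv : v ∈ σ) :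
    Pi.single v 1 ∈ closedSimplex σ := by
  refine ⟨fun i => ?_, by simp, fun i hi => ?_⟩
  · by_cases h : i = v <;> simp [h]
  · by_cases h : i = v
    · exact h ▸ hv
    · simp [h] at hi

variable {L : Finset (Finset (Fin m))}

lemma mem_realization_iff {f : Fin m → ℝ} : f ∈ realization L ↔ ∃ σ ∈ L, f ∈ closedSimplex σ :=
  ⟨fun ⟨h0, h1, σ, hσ, hs⟩ => ⟨σ, hσ, h0, h1, hs⟩, fun ⟨σ, hσ, h0, h1, hs⟩ => ⟨h0, h1, σ, hσ, hs⟩⟩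

lemma closedSimplex_subset_realization {σ : Finset (Fin m)} (hσ : σ ∈ L) :
    closedSimplex σ ⊆ realization L :=
  fun _ hf => mem_realization_iff.2 ⟨σ, hσ, hf⟩

lemma exists_ne_zero_of_mem_realization {z : Fin m → ℝ} (hz : z ∈ realization L) :
    ∃ i, z i ≠ 0 := by
  obtain ⟨i, -, hi⟩ := Finset.exists_ne_zero_of_sum_ne_zero (hz.2.1 ▸ one_ne_zero)
  exact ⟨i, hi⟩

variable (L) in
def openStar (v : Fin m) : Set (Fin m → ℝ) :=
  realization L ∩ {f | f v ≠ 0}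

lemma starConvex_openStar (v : Fin m) : StarConvex ℝ (Pi.single v 1) (openStar L v) := by
  rintro y ⟨hy, hyv⟩ a b ha hb hab
  obtain ⟨σ, hσ, hyσ⟩ := mem_realization_iff.1 hy
  refine ⟨closedSimplex_subset_realization hσ (convex_closedSimplex σ
    (single_mem_closedSimplex (hyσ.2.2 v hyv)) hyσ ha hb hab), ?_⟩
  have hyv' : 0 < y v := lt_of_le_of_ne (hy.1 v) (Ne.symm hyv)
  simp only [mem_ofPred_eq, Pi.add_apply, Pi.smul_apply, Pi.single_eq_same, smul_eq_mul, mul_one]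
  rcases ha.eq_or_lt with rfl | ha
  · rw [zero_add] at hab
    simpa [hab] using hyv
  · positivity

lemma segment_subset_openStar {v : Fin m} {z : Fin m → ℝ} (hz : z ∈ openStar L v) :
    [z -[ℝ] Pi.single v 1] ⊆ openStar L v :=
  segment_symm ℝ z _ ▸ (starConvex_openStar v).segment_subset hz

lemma isOpen_preimage_openStar (v : Fin m) :
    IsOpen ((↑) ⁻¹' openStar L v : Set (realization L)) := by
  have : ((↑) ⁻¹' openStar L v : Set (realization L)) = {z | z.1 v ≠ 0} := by
    ext z
    simp [openStar]
  rw [this]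
  exact isOpen_ne.preimage ((continuous_apply v).comp continuous_subtype_val)

lemma single_mem_openStar {v : Fin m} (hv : {v} ∈ L) : Pi.single v 1 ∈ openStar L v :=
  ⟨closedSimplex_subset_realization hv (single_mem_closedSimplex (Finset.mem_singleton_self v)),
    by simp⟩

lemma pair_mem_of_ne_zero (hdown : ∀ σ ∈ L, ∀ τ ⊆ σ, τ ∈ L) (z : realization L) {v w : Fin m}
    (hv : z.1 v ≠ 0) (hw : z.1 w ≠ 0) : {v, w} ∈ L := by
  obtain ⟨σ, hσ, hzσ⟩ := mem_realization_iff.1 z.2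
  exact hdown σ hσ _ (Finset.insert_subset (hzσ.2.2 v hv)
    (Finset.singleton_subset_iff.2 (hzσ.2.2 w hw)))

variable (hvert : ∀ i, ({i} : Finset (Fin m)) ∈ L)

def vertex (v : Fin m) : realization L :=
  ⟨Pi.single v 1, closedSimplex_subset_realization (hvert v)
    (single_mem_closedSimplex (Finset.mem_singleton_self v))⟩

def spoke (z : realization L) (v : Fin m) (hz : z.1 v ≠ 0) : Path z (vertex hvert v) :=
  segmentPath z (vertex hvert v) ((segment_subset_openStar ⟨z.2, hz⟩).trans inter_subset_left)

lemma range_spoke_subset_openStar (z : realization L) (v : Fin m) (hz : z.1 v ≠ 0) :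
    range (spoke hvert z v hz) ⊆ (↑) ⁻¹' openStar L v :=
  (range_segmentPath_subset _ _ _).trans (preimage_mono (segment_subset_openStar ⟨z.2, hz⟩))

lemma range_spoke_subset_closedSimplex (z : realization L) {v : Fin m} (hz : z.1 v ≠ 0)
    {σ : Finset (Fin m)} (hzσ : z.1 ∈ closedSimplex σ) :
    range (spoke hvert z v hz) ⊆ (↑) ⁻¹' closedSimplex σ :=
  (range_segmentPath_subset _ _ _).trans (preimage_mono ((convex_closedSimplex σ).segment_subset
    hzσ (single_mem_closedSimplex (hzσ.2.2 v hz))))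

def edgePath {v w : Fin m} (h : {v, w} ∈ L) : Path (vertex hvert v) (vertex hvert w) :=
  segmentPath _ _ (((convex_closedSimplex _).segment_subset
    (single_mem_closedSimplex (Finset.mem_insert_self v {w}))
    (single_mem_closedSimplex (by simp))).trans (closedSimplex_subset_realization h))

lemma range_edgePath_subset {v w : Fin m} (h : {v, w} ∈ L) {σ : Finset (Fin m)} (hv : v ∈ σ)
    (hw : w ∈ σ) : range (edgePath hvert h) ⊆ (↑) ⁻¹' closedSimplex σ :=
  (range_segmentPath_subset _ _ _).trans (preimage_mono ((convex_closedSimplex σ).segment_subset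
    (single_mem_closedSimplex hv) (single_mem_closedSimplex hw)))

lemma pathHom_eq_spoke_comp_inv_spoke {u : Fin m} {x y : realization L} (q : Path x y)
    (hq : range q ⊆ (↑) ⁻¹' openStar L u) :
    pathHom q = pathHom (spoke hvert x u (hq ⟨0, q.source⟩).2) ≫
      inv (pathHom (spoke hvert y u (hq ⟨1, q.target⟩).2)) := by
  rw [← pathHom_symm, ← pathHom_trans]
  refine pathHom_eq_of_range_subset inter_subset_left (starConvex_openStar u)
    (single_mem_openStar (hvert u)) hq ?_
  rw [Path.trans_range, Path.symm_range]
  exact union_subset (range_spoke_subset_openStar ..) (range_spoke_subset_openStar ..)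

variable [PathConnectedSpace (realization L)]

/-- Off the edges of `L` the value is an arbitrary junk class. -/
noncomputable def edgeHom (v w : Fin m) :
    FundamentalGroupoid.mk (vertex hvert v) ⟶ FundamentalGroupoid.mk (vertex hvert w) :=
  if h : {v, w} ∈ L then pathHom (edgePath hvert h) else pathHom (PathConnectedSpace.somePath _ _)

lemma edgeHom_of_mem {v w : Fin m} (h : {v, w} ∈ L) :
    edgeHom hvert v w = pathHom (edgePath hvert h) :=
  dif_pos h

variable {hvert} (hdown : ∀ σ ∈ L, ∀ τ ⊆ σ, τ ∈ L)
include hdown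

lemma spoke_comp_edgeHom (z : realization L) {v w : Fin m} (hv : z.1 v ≠ 0) (hw : z.1 w ≠ 0) :
    pathHom (spoke hvert z v hv) ≫ edgeHom hvert v w = pathHom (spoke hvert z w hw) := by
  obtain ⟨σ, hσ, hzσ⟩ := mem_realization_iff.1 z.2
  rw [edgeHom_of_mem hvert (pair_mem_of_ne_zero hdown z hv hw), ← pathHom_trans]
  refine pathHom_eq_of_range_subset (closedSimplex_subset_realization hσ)
    ((convex_closedSimplex σ).starConvex hzσ) hzσ ?_
    (range_spoke_subset_closedSimplex hvert z hw hzσ)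
  rw [Path.trans_range]
  exact union_subset (range_spoke_subset_closedSimplex hvert z hv hzσ)
    (range_edgePath_subset _ _ (hzσ.2.2 v hv) (hzσ.2.2 w hw))

lemma edgeHom_comp_edgeHom {u v w : Fin m} (h : {u, v, w} ∈ L) :
    edgeHom hvert u v ≫ edgeHom hvert v w = edgeHom hvert u w := by
  have hu : u ∈ ({u, v, w} : Finset (Fin m)) := by simp
  have hv : v ∈ ({u, v, w} : Finset (Fin m)) := by simp
  have hw : w ∈ ({u, v, w} : Finset (Fin m)) := by simp
  have hpair : ∀ {a b}, a ∈ ({u, v, w} : Finset (Fin m)) → b ∈ ({u, v, w} : Finset (Fin m)) →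
      {a, b} ∈ L := fun ha hb =>
    hdown _ h _ (Finset.insert_subset ha (Finset.singleton_subset_iff.2 hb))
  rw [edgeHom_of_mem hvert (hpair hu hv), edgeHom_of_mem hvert (hpair hv hw),
    edgeHom_of_mem hvert (hpair hu hw), ← pathHom_trans]
  refine pathHom_eq_of_range_subset (closedSimplex_subset_realization h)
    ((convex_closedSimplex _).starConvex (single_mem_closedSimplex hu))
    (single_mem_closedSimplex hu) ?_
    (range_edgePath_subset _ _ hu hw)
  rw [Path.trans_range]
  exact union_subset (range_edgePath_subset _ _ hu hv) (range_edgePath_subset _ _ hv hw)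

end Realization

section PathConnected

variable {m : ℕ}

lemma realization_mono {K L : Finset (Finset (Fin m))} (h : K ⊆ L) :
    realization K ⊆ realization L :=
  fun _ ⟨h0, h1, σ, hσ, hs⟩ => ⟨h0, h1, σ, h hσ, hs⟩

theorem pathConnectedSpace_realization_of_subset {K L : Finset (Finset (Fin m))} (hKL : K ⊆ L)
    (hvert : ∀ i, ({i} : Finset (Fin m)) ∈ K) [ConnectedSpace (realization K)] :
    PathConnectedSpace (realization L) := by
  have hvertL : ∀ i, ({i} : Finset (Fin m)) ∈ L := fun i => hKL (hvert i)
  let ι : realization K → realization L := inclusion (realization_mono hKL)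
  have hjoined : ∀ y y', Joined (ι y) (ι y') := by
    refine PreconnectedSpace.induction₂' _ (fun y => ?_) ⟨fun _ _ _ => Joined.trans⟩
    obtain ⟨v, hv⟩ := exists_ne_zero_of_mem_realization y.2
    filter_upwards [(isOpen_preimage_openStar v).mem_nhds ⟨y.2, hv⟩] with y' hy'
    have h : Joined (ι y) (ι y') :=
      ⟨(spoke hvertL (ι y) v hv).trans (spoke hvertL (ι y') v hy'.2).symm⟩
    exact ⟨h, h.symm⟩
  obtain ⟨y₀⟩ := ‹ConnectedSpace (realization K)›.toNonempty
  refine ⟨⟨ι y₀⟩, fun x y => ?_⟩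
  obtain ⟨v, hv⟩ := exists_ne_zero_of_mem_realization x.2
  obtain ⟨w, hw⟩ := exists_ne_zero_of_mem_realization y.2
  have hx : Joined x (vertex hvertL v) := ⟨spoke hvertL x v hv⟩
  have hy : Joined y (vertex hvertL w) := ⟨spoke hvertL y w hw⟩
  exact (hx.trans (hjoined (vertex hvert v) (vertex hvert w))).trans hy.symm

end PathConnected

section EdgeClasses

variable {m : ℕ} {L : Finset (Finset (Fin m))} (hvert : ∀ i, ({i} : Finset (Fin m)) ∈ L)
  [PathConnectedSpace (realization L)]

/-- `γ` is, up to the spokes at its endpoints, the class of an edge path of `L`. -/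
def IsEdgeClass {x y : realization L}
    (γ : FundamentalGroupoid.mk x ⟶ FundamentalGroupoid.mk y) : Prop :=
  ∃ (v w : Fin m) (hv : x.1 v ≠ 0) (hw : y.1 w ≠ 0) (l : List (Fin m)),
    IsWalk (fun a b => {a, b} ∈ L) v l w ∧
    γ = pathHom (spoke hvert x v hv) ≫ walkHom (edgeHom hvert) v l w ≫
      inv (pathHom (spoke hvert y w hw))

lemma isEdgeClass_pathHom_cast {x y x' y' : realization L} (q : Path x y) (hx : x' = x)
    (hy : y' = y) : IsEdgeClass hvert (pathHom (q.cast hx hy)) ↔ IsEdgeClass hvert (pathHom q) := by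
  subst hx hy
  rfl

variable {hvert} (hdown : ∀ σ ∈ L, ∀ τ ⊆ σ, τ ∈ L)
include hdown

lemma IsEdgeClass.comp {x y z : realization L}
    {γ : FundamentalGroupoid.mk x ⟶ FundamentalGroupoid.mk y}
    {γ' : FundamentalGroupoid.mk y ⟶ FundamentalGroupoid.mk z} (h : IsEdgeClass hvert γ)
    (h' : IsEdgeClass hvert γ') : IsEdgeClass hvert (γ ≫ γ') := by
  obtain ⟨v, w, hv, hw, l, hl, rfl⟩ := h
  obtain ⟨v', w', hv', hw', l', hl', rfl⟩ := h'
  refine ⟨v, w', hv, hw', l ++ w :: v' :: l', isWalk_append_cons.2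
    ⟨hl, isWalk_cons.2 ⟨pair_mem_of_ne_zero hdown y hw hv', hl'⟩⟩, ?_⟩
  rw [walkHom_append_cons, walkHom_cons, ← spoke_comp_edgeHom hdown y hw hv']
  simp only [Category.assoc, IsIso.inv_hom_id_assoc]

lemma isEdgeClass_of_range_subset_openStar {u : Fin m} {x y : realization L} (q : Path x y)
    (hq : range q ⊆ (↑) ⁻¹' openStar L u) : IsEdgeClass hvert (pathHom q) := by
  have hx := (hq ⟨0, q.source⟩).2
  refine ⟨u, u, hx, (hq ⟨1, q.target⟩).2, [], isWalk_nil.2 (by simpa using hvert u), ?_⟩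
  rw [walkHom_nil, ← Category.assoc, spoke_comp_edgeHom hdown x hx hx]
  exact pathHom_eq_spoke_comp_inv_spoke hvert q hq

theorem isEdgeClass_pathHom {x y : realization L} (p : Path x y) :
    IsEdgeClass hvert (pathHom p) := by
  obtain ⟨t, ht0, htmono, ⟨N, htN⟩, hcover⟩ := exists_monotone_Icc_subset_open_cover_unitInterval
    (c := fun u => p ⁻¹' ((↑) ⁻¹' openStar L u))
    (fun u => (isOpen_preimage_openStar u).preimage p.continuous) fun s _ =>
      mem_iUnion.2 ((exists_ne_zero_of_mem_realization (p s).2).imp fun _ hu => ⟨(p s).2, hu⟩)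
  choose u hu using hcover
  have piece : ∀ n, IsEdgeClass hvert (pathHom (p.subpath (t n) (t (n + 1)))) := fun n =>
    isEdgeClass_of_range_subset_openStar hdown _ (by
      rw [Path.range_subpath_of_le _ _ _ (htmono n.le_succ)]
      exact image_subset_iff.2 (hu n))
  have key : ∀ n, IsEdgeClass hvert (pathHom (p.subpath (t 0) (t (n + 1)))) := by
    intro n
    induction n with
    | zero => exact piece 0
    | succ n ih =>
      rw [← pathHom_eq_pathHom_iff.2 ⟨Path.Homotopy.subpathTransSubpath p _ (t (n + 1)) _⟩,
        pathHom_trans]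
      exact ih.comp hdown (piece (n + 1))
  have h := key N
  rw [ht0, htN (N + 1) N.le_succ, Path.subpath_zero_one] at h
  exact (isEdgeClass_pathHom_cast hvert p _ _).1 h

theorem IsEdgeClass.eq_id
    (htri : ∀ u v w, {u, v} ∈ L → {v, w} ∈ L → {u, w} ∈ L → {u, v, w} ∈ L)
    (hchordal : IsChordal fun a b => {a, b} ∈ L) {z : realization L}
    {γ : FundamentalGroupoid.mk z ⟶ FundamentalGroupoid.mk z} (h : IsEdgeClass hvert γ) :
    γ = 𝟙 _ := by
  obtain ⟨v, w, hv, hw, l, hl, rfl⟩ := h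
  have hclosed : walkHom (edgeHom hvert) v (l ++ [w]) v = 𝟙 _ :=
    walkHom_eq_id_of_isChordal (F := fun a => FundamentalGroupoid.mk (vertex hvert a))
      (fun a => by rw [Finset.pair_eq_singleton]; exact hvert a)
      (fun a b h => by rwa [Finset.pair_comm])
      (fun u v w huv hvw huw => edgeHom_comp_edgeHom hdown (htri u v w huv hvw huw)) hchordal
      (isWalk_append_cons.2 ⟨hl, isWalk_nil.2 (pair_mem_of_ne_zero hdown z hw hv)⟩)
  have hinv : inv (pathHom (spoke hvert z w hw)) =
      edgeHom hvert w v ≫ inv (pathHom (spoke hvert z v hv)) := by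
    rw [← spoke_comp_edgeHom hdown z hw hv, IsIso.inv_comp, IsIso.hom_inv_id_assoc]
  rw [walkHom_append_cons, walkHom_nil] at hclosed
  rw [hinv, ← Category.assoc (walkHom _ _ _ _), hclosed, Category.id_comp, IsIso.hom_inv_id]

end EdgeClasses

theorem simplyConnectedSpace_realization {m : ℕ} {L : Finset (Finset (Fin m))}
    (hdown : ∀ σ ∈ L, ∀ τ ⊆ σ, τ ∈ L) (hvert : ∀ i, ({i} : Finset (Fin m)) ∈ L)
    [PathConnectedSpace (realization L)]
    (htri : ∀ u v w, {u, v} ∈ L → {v, w} ∈ L → {u, w} ∈ L → {u, v, w} ∈ L)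
    (hchordal : IsChordal fun a b => {a, b} ∈ L) : SimplyConnectedSpace (realization L) := by
  refine simply_connected_iff_loops_nullhomotopic.2 ⟨inferInstance, fun z γ => ?_⟩
  exact pathHom_eq_pathHom_iff.1
    ((isEdgeClass_pathHom (hvert := hvert) hdown γ).eq_id hdown htri hchordal)

section Fill

variable {m : ℕ} {K : Finset (Finset (Fin m))}

lemma subset_fillMF3 : K ⊆ fillMF3 K :=
  Finset.subset_union_left

lemma mem_fillMF3 {σ : Finset (Fin m)} :
    σ ∈ fillMF3 K ↔ σ ∈ K ∨ 3 ≤ σ.card ∧ IsMissingFace K σ := by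
  simp [fillMF3]

lemma fillMF3_down (hdown : ∀ σ ∈ K, ∀ τ ⊆ σ, τ ∈ K) :
    ∀ σ ∈ fillMF3 K, ∀ τ ⊆ σ, τ ∈ fillMF3 K := by
  intro σ hσ τ hτ
  rcases mem_fillMF3.1 hσ with hK | ⟨-, -, hsub⟩
  · exact subset_fillMF3 (hdown σ hK τ hτ)
  · rcases hτ.eq_or_ssubset with rfl | hτ
    · exact hσ
    · exact subset_fillMF3 (hsub τ hτ)

lemma pair_mem_fillMF3 {v w : Fin m} : {v, w} ∈ fillMF3 K ↔ {v, w} ∈ K := by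
  have : ({v, w} : Finset (Fin m)).card ≤ 2 := Finset.card_le_two
  rw [mem_fillMF3, or_iff_left fun h => absurd h.1 (by omega)]

lemma Finset.subset_pair_of_subset_triple {α : Type*} [DecidableEq α] {u v w : α} {τ : Finset α}
    (hτ : τ ⊆ {u, v, w}) (hcard : τ.card ≤ 2) : τ ⊆ {u, v} ∨ τ ⊆ {v, w} ∨ τ ⊆ {u, w} := by
  by_contra! h
  obtain ⟨⟨a, ha, ha'⟩, ⟨b, hb, hb'⟩, ⟨c, hc, hc'⟩⟩ :=
    And.imp Finset.not_subset.1 (And.imp Finset.not_subset.1 Finset.not_subset.1) h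
  have ha2 := hτ ha
  have hb2 := hτ hb
  have hc2 := hτ hc
  simp only [Finset.mem_insert, Finset.mem_singleton] at ha' hb' hc' ha2 hb2 hc2
  have : ({a, b, c} : Finset α).card ≤ τ.card := Finset.card_le_card (by
    intro x hx
    simp only [Finset.mem_insert, Finset.mem_singleton] at hx
    rcases hx with rfl | rfl | rfl <;> assumption)
  rw [Finset.card_insert_of_notMem (by simp; grind), Finset.card_pair (by grind)] at this
  omega

lemma triple_mem_fillMF3 (hdown : ∀ σ ∈ K, ∀ τ ⊆ σ, τ ∈ K) {u v w : Fin m} (huv : {u, v} ∈ K)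
    (hvw : {v, w} ∈ K) (huw : {u, w} ∈ K) : {u, v, w} ∈ fillMF3 K := by
  have hsmall : ∀ τ ⊆ {u, v, w}, τ.card ≤ 2 → τ ∈ K := fun τ hτ hcard => by
    rcases Finset.subset_pair_of_subset_triple hτ hcard with h | h | h
    exacts [hdown _ huv τ h, hdown _ hvw τ h, hdown _ huw τ h]
  by_cases h3 : 3 ≤ ({u, v, w} : Finset (Fin m)).card
  · by_cases hK : {u, v, w} ∈ K
    · exact subset_fillMF3 hK
    · refine mem_fillMF3.2 (Or.inr ⟨h3, hK, fun τ hτ => hsmall τ hτ.subset ?_⟩)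
      have := Finset.card_lt_card hτ
      have : ({u, v, w} : Finset (Fin m)).card ≤ 3 := Finset.card_le_three
      omega
  · exact subset_fillMF3 (hsmall _ subset_rfl (by omega))

end Fill

theorem stmt18 {m : ℕ} (K : Finset (Finset (Fin m)))
    (hdown : ∀ σ ∈ K, ∀ τ ⊆ σ, τ ∈ K)
    (hvert : ∀ i : Fin m, ({i} : Finset (Fin m)) ∈ K)
    -- `K` is connected
    (hconn : ConnectedSpace ↥(realization K))
    -- the 1-skeleton of `K` is chordal
    (hchordal : ∀ n : ℕ, 4 ≤ n → ∀ f : ZMod n → Fin m, Function.Injective f →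
      (∀ i : ZMod n, ({f i, f (i + 1)} : Finset (Fin m)) ∈ K) →
      ∃ i j : ZMod n, j ≠ i ∧ j ≠ i + 1 ∧ i ≠ j + 1 ∧
        ({f i, f j} : Finset (Fin m)) ∈ K) :
    SimplyConnectedSpace ↥(realization (fillMF3 K)) := by
  have := pathConnectedSpace_realization_of_subset subset_fillMF3 hvert
  have hedges : (fun a b => ({a, b} : Finset (Fin m)) ∈ fillMF3 K) = fun a b => {a, b} ∈ K := by
    funext a b
    exact propext pair_mem_fillMF3
  refine simplyConnectedSpace_realization (fillMF3_down hdown) (fun i => subset_fillMF3 (hvert i))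
    (fun u v w huv hvw huw => triple_mem_fillMF3 hdown (pair_mem_fillMF3.1 huv)
      (pair_mem_fillMF3.1 hvw) (pair_mem_fillMF3.1 huw)) ?_
  rw [hedges]
  exact hchordal
end
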